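/- arXiv:1805.06792 — 11 statements merged into one kernel-verified Lean document; each statement's English description precedes it below -/
import Mathlib

section
/- For any nonnegative real numbers a_1, ..., a_n with each a_i ≥ 1, the sum over i of a_i / (a_1 + ... + a_i) is at most 1 + log(a_1 + ... + a_n). -/
/-!
Writing `S i = a 0 + ... + a i`, the inequality `log x ≥ 1 - 1/x` at `x = S i / S (i - 1)` gives
`a i / S i ≤ log (S i) - log (S (i - 1))`. Summing telescopes to `log (S n) - log (a 0)`; the first
term `a 0 / S 0` is `1`, and `log (a 0) ≥ 0`.
-/

open Finset Real

lemma div_add_le_log_add_sub_log {s b : ℝ} (hs : 0 < s) (hb : 0 ≤ b) :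
    b / (s + b) ≤ log (s + b) - log s := by
  have hsb : 0 < s + b := by linarith
  calc b / (s + b) = 1 - ((s + b) / s)⁻¹ := by field_simp; ring
    _ ≤ log ((s + b) / s) := one_sub_inv_le_log_of_pos (by positivity)
    _ = log (s + b) - log s := log_div hsb.ne' hs.ne'

lemma sum_div_partial_sum_le_one_add_log_sub_log (a : ℕ → ℝ) (n : ℕ) (h0 : 0 < a 0)
    (ha : ∀ i ≤ n, 0 ≤ a i) :
    ∑ i ∈ range (n + 1), a i / ∑ j ∈ range (i + 1), a j ≤
      1 + log (∑ i ∈ range (n + 1), a i) - log (a 0) := by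
  induction n with
  | zero => simp [h0.ne']
  | succ n ih =>
    have hpartial_pos : 0 < ∑ i ∈ range (n + 1), a i :=
      sum_pos' (fun i hi => ha i (by grind)) ⟨0, by simp, h0⟩
    have hstep := div_add_le_log_add_sub_log hpartial_pos (ha (n + 1) le_rfl)
    rw [sum_range_succ (fun i => a i / ∑ j ∈ range (i + 1), a j), sum_range_succ a]
    linarith [ih fun i hi => ha i (by omega)]

/-- For nonnegative reals `a 0, ..., a (n-1)` each at least 1, the sum of
`a i / (a 0 + ... + a i)` is at most `1 + log (a 0 + ... + a (n-1))`. -/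
theorem stmt_0 (n : ℕ) (a : ℕ → ℝ) (ha : ∀ i < n, 1 ≤ a i) :
    ∑ i ∈ Finset.range n, a i / (∑ j ∈ Finset.range (i + 1), a j) ≤
      1 + Real.log (∑ i ∈ Finset.range n, a i) := by
  cases n with
  | zero => simp
  | succ n =>
    have ha0 : 1 ≤ a 0 := ha 0 n.succ_pos
    have hbound := sum_div_partial_sum_le_one_add_log_sub_log a n (by linarith)
      fun i hi => zero_le_one.trans (ha i (by omega))
    linarith [log_nonneg ha0]
end

section
/- Let K ⊆ ℝ^d be a compact λ-strongly convex set. For nonzero vectors p, q ∈ ℝ^d, let x_p = argmax_{x ∈ K} ⟨p, x⟩ and x_q = argmax_{x ∈ K} ⟨q, x⟩. Then ‖x_p − x_q‖ ≤ 2‖p − q‖ / (λ(‖p‖ + ‖q‖)). -/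
/-!
Testing the maximality of `x_p` against the point `θ x_p + (1 - θ) x + r p / ‖p‖` with
`r = θ (1 - θ) λ/2 ‖x_p - x‖²`, which lies in `K` by strong convexity, and letting `θ → 1` gives the quadratic growth bound
`λ/2 ‖p‖ ‖x_p - x‖² ≤ ⟪p, x_p - x⟫` on `K`. Adding this bound for `(p, x_q)` and `(q, x_p)` gives
`λ/2 (‖p‖ + ‖q‖) ‖x_p - x_q‖² ≤ ⟪p - q, x_p - x_q⟫ ≤ ‖p - q‖ ‖x_p - x_q‖`.
-/

open scoped RealInnerProductSpace
open Set Metric Filter Topology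

variable {E : Type*} [NormedAddCommGroup E] [InnerProductSpace ℝ E]

def IsStronglyConvex (lam : ℝ) (K : Set E) : Prop :=
  ∀ u ∈ K, ∀ v ∈ K, ∀ θ : ℝ, θ ∈ Set.Icc (0:ℝ) 1 →
    Metric.closedBall (θ • u + (1 - θ) • v) (θ * (1 - θ) * (lam / 2) * ‖u - v‖ ^ 2) ⊆ K

namespace IsStronglyConvex

variable {lam : ℝ} {K : Set E} {p xp x : E}

theorem mul_le_inner_sub_of_isMaxOn (hK : IsStronglyConvex lam K) (hlam : 0 ≤ lam)
    (hxp : xp ∈ K) (hmax : IsMaxOn (⟪p, ·⟫) K xp) (hx : x ∈ K) {θ : ℝ} (hθ : θ ∈ Ico 0 1) :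
    θ * (lam / 2 * ‖p‖ * ‖xp - x‖ ^ 2) ≤ ⟪p, xp - x⟫ := by
  obtain ⟨hθ0, hθ1⟩ := hθ
  set r := θ * (1 - θ) * (lam / 2) * ‖xp - x‖ ^ 2
  have hr : 0 ≤ r := by have := sub_nonneg.mpr hθ1.le; positivity
  have hunit : ‖‖p‖⁻¹ • p‖ ≤ 1 := by
    rcases eq_or_ne p 0 with rfl | hp
    · simp
    · exact (norm_smul_inv_norm hp).le
  have hz : θ • xp + (1 - θ) • x + r • (‖p‖⁻¹ • p) ∈ K := by
    refine hK xp hxp x hx θ ⟨hθ0, hθ1.le⟩ ?_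
    rw [mem_closedBall, dist_eq_norm, add_sub_cancel_left, norm_smul, Real.norm_of_nonneg hr]
    exact mul_le_of_le_one_right hr hunit
  have hinner : ⟪p, ‖p‖⁻¹ • p⟫ = ‖p‖ := by
    rw [real_inner_smul_right, real_inner_self_eq_norm_sq]
    rcases eq_or_ne ‖p‖ 0 with h | h
    · simp [h]
    · field_simp
  have hle := isMaxOn_iff.mp hmax _ hz
  simp only [inner_add_right, real_inner_smul_right, hinner] at hle
  rw [inner_sub_right]
  refine le_of_mul_le_mul_left ?_ (sub_pos.mpr hθ1)
  linear_combination hle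

theorem quadratic_growth_of_isMaxOn (hK : IsStronglyConvex lam K) (hlam : 0 ≤ lam)
    (hxp : xp ∈ K) (hmax : IsMaxOn (⟪p, ·⟫) K xp) (hx : x ∈ K) :
    lam / 2 * ‖p‖ * ‖xp - x‖ ^ 2 ≤ ⟪p, xp - x⟫ := by
  have hlim : Tendsto (fun θ : ℝ ↦ θ * (lam / 2 * ‖p‖ * ‖xp - x‖ ^ 2)) (𝓝[<] 1)
      (𝓝 (1 * (lam / 2 * ‖p‖ * ‖xp - x‖ ^ 2))) :=
    (tendsto_id.mul_const _).mono_left nhdsWithin_le_nhds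
  rw [← one_mul (_ * _ ^ 2)]
  refine le_of_tendsto hlim ?_
  filter_upwards [Ioo_mem_nhdsLT zero_lt_one] with θ hθ
  exact hK.mul_le_inner_sub_of_isMaxOn hlam hxp hmax hx (Ioo_subset_Ico_self hθ)

theorem mul_norm_sub_sq_le_inner_sub {q xq : E} (hK : IsStronglyConvex lam K) (hlam : 0 ≤ lam)
    (hxp : xp ∈ K) (hmaxp : IsMaxOn (⟪p, ·⟫) K xp)
    (hxq : xq ∈ K) (hmaxq : IsMaxOn (⟪q, ·⟫) K xq) :
    lam / 2 * (‖p‖ + ‖q‖) * ‖xp - xq‖ ^ 2 ≤ ⟪p - q, xp - xq⟫ := by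
  have hp := hK.quadratic_growth_of_isMaxOn hlam hxp hmaxp hxq
  have hq := hK.quadratic_growth_of_isMaxOn hlam hxq hmaxq hxp
  rw [norm_sub_rev, ← neg_sub xp xq, inner_neg_right] at hq
  rw [inner_sub_left]
  linarith

end IsStronglyConvex

theorem stmt_5_general {d : ℕ} (K : Set (EuclideanSpace ℝ (Fin d)))
    (lam : ℝ) (hlam : 0 < lam)
    (hK : ∀ u ∈ K, ∀ v ∈ K, ∀ θ : ℝ, θ ∈ Set.Icc (0:ℝ) 1 →
      Metric.closedBall (θ • u + (1 - θ) • v) (θ * (1 - θ) * (lam / 2) * ‖u - v‖ ^ 2) ⊆ K)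
    (p q xp xq : EuclideanSpace ℝ (Fin d)) (hp : p ≠ 0)
    (hxp : xp ∈ K ∧ ∀ x ∈ K, ⟪p, x⟫ ≤ ⟪p, xp⟫)
    (hxq : xq ∈ K ∧ ∀ x ∈ K, ⟪q, x⟫ ≤ ⟪q, xq⟫) :
    ‖xp - xq‖ ≤ 2 * ‖p - q‖ / (lam * (‖p‖ + ‖q‖)) := by
  have hsum : 0 < lam * (‖p‖ + ‖q‖) := by have := norm_pos_iff.mpr hp; positivity
  have hmono := IsStronglyConvex.mul_norm_sub_sq_le_inner_sub hK hlam.le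
    hxp.1 (isMaxOn_iff.mpr hxp.2) hxq.1 (isMaxOn_iff.mpr hxq.2)
  have hcs := real_inner_le_norm (p - q) (xp - xq)
  rcases (norm_nonneg (xp - xq)).eq_or_lt with hD | hD
  · rw [← hD]; positivity
  · rw [le_div_iff₀ hsum]
    nlinarith

/-- Lipschitzness of the linear-maximization oracle on a `λ`-strongly convex compact set. -/
theorem stmt_5 {d : ℕ} (K : Set (EuclideanSpace ℝ (Fin d)))
    (hKc : IsCompact K) (lam : ℝ) (hlam : 0 < lam)
    (hK : ∀ u ∈ K, ∀ v ∈ K, ∀ θ : ℝ, θ ∈ Set.Icc (0:ℝ) 1 →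
      Metric.closedBall (θ • u + (1 - θ) • v) (θ * (1 - θ) * (lam / 2) * ‖u - v‖ ^ 2) ⊆ K)
    (p q xp xq : EuclideanSpace ℝ (Fin d)) (hp : p ≠ 0) (hq : q ≠ 0)
    (hxp : xp ∈ K ∧ ∀ x ∈ K, ⟪p, x⟫ ≤ ⟪p, xp⟫)
    (hxq : xq ∈ K ∧ ∀ x ∈ K, ⟪q, x⟫ ≤ ⟪q, xq⟫) :
    ‖xp - xq‖ ≤ 2 * ‖p - q‖ / (lam * (‖p‖ + ‖q‖)) :=
  stmt_5_general K lam hlam hK p q xp xq hp hxp hxq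
end

section
/- Let R : Y → ℝ be β-strongly convex with respect to a norm ‖·‖ on a convex set Y, and let η > 0. For vectors u₁, u₂, define y₁ = argmin_{y ∈ Y} ⟨y, u₁⟩ + (1/η)R(y) and y₂ = argmin_{y ∈ Y} ⟨y, u₂⟩ + (1/η)R(y). Then ‖y₁ − y₂‖ ≤ (η/β)‖u₁ − u₂‖_*. -/
/-!
The objective `y ↦ u y + R y / η` is `(β / η)`-strongly convex, so it grows quadratically away
from its minimizer. Adding the growth inequalities of the two objectives at `y₁` and `y₂` gives
`(β / η) ‖y₁ - y₂‖² ≤ (u₂ - u₁) (y₁ - y₂) ≤ ‖u₁ - u₂‖ ‖y₁ - y₂‖`.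
-/

open Filter Topology

section StrongConvexity

variable {E : Type*} [NormedAddCommGroup E] [NormedSpace ℝ E]

/-- With `c = a • x + b • y`, the subgradient terms of the two inequalities at `c` cancel since
`a • (x - c) + b • (y - c) = 0`. -/
theorem strongConvexOn_of_subgradient {s : Set E} (hs : Convex ℝ s) {f : E → ℝ}
    (f' : E → StrongDual ℝ E) {m : ℝ}
    (hf : ∀ x ∈ s, ∀ y ∈ s, f y + f' y (x - y) + m / 2 * ‖x - y‖ ^ 2 ≤ f x) :
    StrongConvexOn s m f := by
  refine ⟨hs, fun x hx y hy a b ha hb hab => ?_⟩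
  obtain rfl : b = 1 - a := by linarith
  set c := a • x + (1 - a) • y
  have hc : c ∈ s := hs hx hy ha hb hab
  have hxc : x - c = (1 - a) • (x - y) := by simp only [c]; module
  have hyc : y - c = (-a) • (x - y) := by simp only [c]; module
  have hfx := hf x hx c hc
  have hfy := hf y hy c hc
  rw [hxc, map_smul, norm_smul, Real.norm_of_nonneg hb, smul_eq_mul] at hfx
  rw [hyc, map_smul, norm_smul, norm_neg, Real.norm_of_nonneg ha, smul_eq_mul] at hfy
  simp only [smul_eq_mul]
  nlinarith [mul_le_mul_of_nonneg_left hfx ha, mul_le_mul_of_nonneg_left hfy hb]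

theorem StrongConvexOn.add_mul_sq_norm_sub_le_of_isMinOn {s : Set E} {m : ℝ} {f : E → ℝ}
    (hf : StrongConvexOn s m f) {a b : E} (ha : a ∈ s) (hb : b ∈ s) (hmin : IsMinOn f s a) :
    f a + m / 2 * ‖b - a‖ ^ 2 ≤ f b := by
  have hlim : Tendsto (fun t : ℝ => f a + (1 - t) * (m / 2 * ‖b - a‖ ^ 2)) (𝓝[>] 0)
      (𝓝 (f a + m / 2 * ‖b - a‖ ^ 2)) := by
    have : Continuous fun t : ℝ => f a + (1 - t) * (m / 2 * ‖b - a‖ ^ 2) := by fun_prop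
    simpa using (this.tendsto 0).mono_left nhdsWithin_le_nhds
  refine le_of_tendsto hlim ?_
  filter_upwards [Ioc_mem_nhdsGT one_pos] with t ⟨ht0, ht1⟩
  have ht : t + (1 - t) = 1 := add_sub_cancel t 1
  have hconv := hf.2 hb ha ht0.le (sub_nonneg.2 ht1) ht
  have hseg : f a ≤ f (t • b + (1 - t) • a) := hmin (hf.1 hb ha ht0.le (sub_nonneg.2 ht1) ht)
  simp only [smul_eq_mul] at hconv
  refine le_of_mul_le_mul_left ?_ ht0
  linear_combination hseg + hconv

end StrongConvexity

/-- Stability of regularized-leader minimizers: if `R` is `β`-strongly convex w.r.t. `‖·‖`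
on a convex set `Y`, and `y₁, y₂` minimize `⟨y, u₁⟩ + R y / η` resp. `⟨y, u₂⟩ + R y / η`
over `Y`, then `‖y₁ − y₂‖ ≤ (η/β) ‖u₁ − u₂‖_*` (dual/operator norm). -/
theorem stmt_6 {E : Type*} [NormedAddCommGroup E] [NormedSpace ℝ E]
    (Y : Set E) (hY : Convex ℝ Y)
    (R : E → ℝ) (R' : E → StrongDual ℝ E) (β η : ℝ) (hβ : 0 < β) (hη : 0 < η)
    (hsc : ∀ u ∈ Y, ∀ v ∈ Y, R u ≥ R v + R' v (u - v) + β / 2 * ‖u - v‖ ^ 2)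
    (u₁ u₂ : StrongDual ℝ E) (y₁ y₂ : E)
    (hy₁ : y₁ ∈ Y ∧ ∀ y ∈ Y, u₁ y₁ + (1 / η) * R y₁ ≤ u₁ y + (1 / η) * R y)
    (hy₂ : y₂ ∈ Y ∧ ∀ y ∈ Y, u₂ y₂ + (1 / η) * R y₂ ≤ u₂ y + (1 / η) * R y) :
    ‖y₁ - y₂‖ ≤ (η / β) * ‖u₁ - u₂‖ := by
  obtain ⟨hy₁Y, hy₁min⟩ := hy₁
  obtain ⟨hy₂Y, hy₂min⟩ := hy₂
  have hF (u : StrongDual ℝ E) : StrongConvexOn Y (β / η) fun y => u y + (1 / η) * R y := by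
    refine strongConvexOn_of_subgradient hY (fun v => u + (1 / η) • R' v) fun x hx y hy => ?_
    have hR := mul_le_mul_of_nonneg_left (hsc x hx y hy) (one_div_nonneg.2 hη.le)
    rw [add_apply, smul_apply, map_sub u, smul_eq_mul]
    linear_combination hR
  have h₁ := (hF u₁).add_mul_sq_norm_sub_le_of_isMinOn hy₁Y hy₂Y hy₁min
  have h₂ := (hF u₂).add_mul_sq_norm_sub_le_of_isMinOn hy₂Y hy₁Y hy₂min
  rw [norm_sub_rev] at h₁
  have hdual : (u₂ - u₁) (y₁ - y₂) ≤ ‖u₁ - u₂‖ * ‖y₁ - y₂‖ :=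
    norm_sub_rev u₁ u₂ ▸ (le_abs_self _).trans ((u₂ - u₁).le_opNorm _)
  simp only [sub_apply, map_sub] at hdual
  have hsq : β / η * ‖y₁ - y₂‖ * ‖y₁ - y₂‖ ≤ ‖u₁ - u₂‖ * ‖y₁ - y₂‖ := by linarith
  rcases (norm_nonneg (y₁ - y₂)).eq_or_lt with hd | hd
  · rw [← hd]; positivity
  · calc ‖y₁ - y₂‖ = η / β * (β / η * ‖y₁ - y₂‖) := by field_simp
      _ ≤ η / β * ‖u₁ - u₂‖ := by gcongr; exact le_of_mul_le_mul_right hsq hd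
end

section
/- Let ℓ_1, ..., ℓ_T be differentiable convex loss functions on a convex set K, with ℓ_t being σ_t-strongly convex. Let x_t = argmin_{x ∈ K} Σ_{s=1}^{t−1} ℓ_s(x) be the Follow-The-Leader iterates (with x_1 arbitrary), and let v_t = ∇ℓ_t(x_t). Then Σ_{t=1}^T ℓ_t(x_t) − min_{x ∈ K} Σ_{t=1}^T ℓ_t(x) ≤ (1/2) Σ_{t=1}^T ‖v_t‖² / (Σ_{τ=1}^t σ_τ). -/
open scoped RealInnerProductSpace

/-- Regret of Follow-The-Leader for strongly convex losses (Kakade–Shalev-Shwartz). -/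
theorem stmt_7 {d : ℕ} (K : Set (EuclideanSpace ℝ (Fin d)))
    (hK : Convex ℝ K) (hKc : IsCompact K) (T : ℕ)
    (ℓ : ℕ → EuclideanSpace ℝ (Fin d) → ℝ)
    (ℓ' : ℕ → EuclideanSpace ℝ (Fin d) → EuclideanSpace ℝ (Fin d))
    (σ : ℕ → ℝ) (hσ : ∀ t, 0 < σ t)
    (hdiff : ∀ t x, HasGradientAt (ℓ t) (ℓ' t x) x)
    (hsc : ∀ t, ∀ u v : EuclideanSpace ℝ (Fin d),
      ℓ t u ≥ ℓ t v + ⟪ℓ' t v, u - v⟫ + σ t / 2 * ‖u - v‖ ^ 2)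
    (x : ℕ → EuclideanSpace ℝ (Fin d)) (hxK : ∀ t, x t ∈ K)
    (hftl : ∀ t, ∀ y ∈ K,
      ∑ s ∈ Finset.range t, ℓ s (x t) ≤ ∑ s ∈ Finset.range t, ℓ s y) :
    ∀ w ∈ K,
      ∑ t ∈ Finset.range T, ℓ t (x t) - ∑ t ∈ Finset.range T, ℓ t w ≤
        (1 / 2) * ∑ t ∈ Finset.range T,
          ‖ℓ' t (x t)‖ ^ 2 / (∑ τ ∈ Finset.range (t + 1), σ τ) := by
  intro w hw
  have hSpos : ∀ t : ℕ, 0 < ∑ τ ∈ Finset.range (t + 1), σ τ :=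
    fun t => Finset.sum_pos (fun i _ => hσ i) ⟨0, Finset.mem_range.mpr (Nat.succ_pos t)⟩
  have hSnn : ∀ t : ℕ, 0 ≤ ∑ τ ∈ Finset.range t, σ τ :=
    fun t => Finset.sum_nonneg fun i _ => (hσ i).le
  -- Strong minimality of the FTL iterate
  have lemA : ∀ t : ℕ, ∀ u ∈ K,
      (∑ s ∈ Finset.range t, ℓ s (x t)) +
        (∑ τ ∈ Finset.range t, σ τ) / 2 * ‖u - x t‖ ^ 2
        ≤ ∑ s ∈ Finset.range t, ℓ s u := by
    intro t u hu
    have key : ∀ lam : ℝ, 0 < lam → lam < 1 →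
        (1 - lam) * ((∑ τ ∈ Finset.range t, σ τ) / 2 * ‖u - x t‖ ^ 2)
          ≤ (∑ s ∈ Finset.range t, ℓ s u) - ∑ s ∈ Finset.range t, ℓ s (x t) := by
      intro lam hl0 hl1
      set z : EuclideanSpace ℝ (Fin d) := x t + lam • (u - x t) with hzdef
      have hzK : z ∈ K := by
        have hmem := hK (hxK t) hu (by linarith : (0:ℝ) ≤ 1 - lam) hl0.le (by ring)
        have he : (1 - lam) • x t + lam • u = z := by
          simp only [hzdef, smul_sub, sub_smul, one_smul]; abel
        rwa [he] at hmem
      have huz : u - z = (1 - lam) • (u - x t) := by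
        simp only [hzdef, smul_sub, sub_smul, one_smul]; abel
      have hxz : x t - z = -(lam • (u - x t)) := by
        simp only [hzdef, smul_sub]; abel
      have comb : ∀ s : ℕ,
          ℓ s z + (lam * (1 - lam) * ‖u - x t‖ ^ 2 / 2) * σ s
            ≤ lam * ℓ s u + (1 - lam) * ℓ s (x t) := by
        intro s
        have h1 := hsc s u z
        have h2 := hsc s (x t) z
        rw [huz, real_inner_smul_right, norm_smul, Real.norm_eq_abs,
          abs_of_pos (by linarith : (0:ℝ) < 1 - lam)] at h1
        rw [hxz, inner_neg_right, real_inner_smul_right, norm_neg, norm_smul,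
          Real.norm_eq_abs, abs_of_pos hl0] at h2
        have e1 := mul_le_mul_of_nonneg_left h1.le hl0.le
        have e2 := mul_le_mul_of_nonneg_left h2.le (by linarith : (0:ℝ) ≤ 1 - lam)
        nlinarith [e1, e2]
      have hsum := Finset.sum_le_sum (s := Finset.range t) (fun s _ => comb s)
      have eA : ∑ s ∈ Finset.range t,
          (ℓ s z + (lam * (1 - lam) * ‖u - x t‖ ^ 2 / 2) * σ s)
          = (∑ s ∈ Finset.range t, ℓ s z) +
            (lam * (1 - lam) * ‖u - x t‖ ^ 2 / 2) * ∑ τ ∈ Finset.range t, σ τ := by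
        rw [Finset.sum_add_distrib, Finset.mul_sum]
      have eB : ∑ s ∈ Finset.range t, (lam * ℓ s u + (1 - lam) * ℓ s (x t))
          = lam * (∑ s ∈ Finset.range t, ℓ s u) +
            (1 - lam) * ∑ s ∈ Finset.range t, ℓ s (x t) := by
        rw [Finset.sum_add_distrib, Finset.mul_sum, Finset.mul_sum]
      rw [eA, eB] at hsum
      have hzmin := hftl t z hzK
      have hfin : lam * ((1 - lam) * ((∑ τ ∈ Finset.range t, σ τ) / 2 * ‖u - x t‖ ^ 2))
          ≤ lam * ((∑ s ∈ Finset.range t, ℓ s u) - ∑ s ∈ Finset.range t, ℓ s (x t)) := by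
        nlinarith [hsum, hzmin]
      exact le_of_mul_le_mul_left hfin hl0
    -- pass to the limit lam → 0
    have hc : 0 ≤ (∑ τ ∈ Finset.range t, σ τ) / 2 * ‖u - x t‖ ^ 2 :=
      mul_nonneg (by linarith [hSnn t]) (by positivity)
    have final : (∑ τ ∈ Finset.range t, σ τ) / 2 * ‖u - x t‖ ^ 2
        ≤ (∑ s ∈ Finset.range t, ℓ s u) - ∑ s ∈ Finset.range t, ℓ s (x t) := by
      apply le_of_forall_pos_le_add
      intro ε hε
      rcases eq_or_lt_of_le hc with h0c | h0c
      · have hk := key (1/2) (by norm_num) (by norm_num)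
        rw [← h0c] at hk ⊢
        linarith
      · set c := (∑ τ ∈ Finset.range t, σ τ) / 2 * ‖u - x t‖ ^ 2 with hcdef
        set lam := min (1/2 : ℝ) (ε / c) with hlam
        have hl0 : 0 < lam := lt_min (by norm_num) (div_pos hε h0c)
        have hl1 : lam < 1 := lt_of_le_of_lt (min_le_left _ _) (by norm_num)
        have hk := key lam hl0 hl1
        have hlc : lam * c ≤ ε := by
          have hle : lam ≤ ε / c := min_le_right _ _
          calc lam * c ≤ (ε / c) * c := mul_le_mul_of_nonneg_right hle h0c.le
            _ = ε := div_mul_cancel₀ _ h0c.ne'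
        linarith
    linarith
  -- Per-round bound
  have lemB : ∀ t : ℕ,
      (∑ s ∈ Finset.range (t + 1), ℓ s (x t)) -
        (∑ s ∈ Finset.range (t + 1), ℓ s (x (t + 1)))
        ≤ 1 / 2 * (‖ℓ' t (x t)‖ ^ 2 / ∑ τ ∈ Finset.range (t + 1), σ τ) := by
    intro t
    have hA := lemA t (x (t + 1)) (hxK (t + 1))
    have hB := hsc t (x (t + 1)) (x t)
    have hip : -⟪ℓ' t (x t), x (t + 1) - x t⟫ ≤ ‖ℓ' t (x t)‖ * ‖x (t + 1) - x t‖ := by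
      have h := abs_real_inner_le_norm (ℓ' t (x t)) (x (t + 1) - x t)
      have := (abs_le.mp h).1
      linarith
    have hΦ1 : ∑ s ∈ Finset.range (t + 1), ℓ s (x t)
        = (∑ s ∈ Finset.range t, ℓ s (x t)) + ℓ t (x t) := Finset.sum_range_succ _ _
    have hΦ2 : ∑ s ∈ Finset.range (t + 1), ℓ s (x (t + 1))
        = (∑ s ∈ Finset.range t, ℓ s (x (t + 1))) + ℓ t (x (t + 1)) :=
      Finset.sum_range_succ _ _
    have hSsucc : ∑ τ ∈ Finset.range (t + 1), σ τ
        = (∑ τ ∈ Finset.range t, σ τ) + σ t := Finset.sum_range_succ _ _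
    have hS1 : 0 < ∑ τ ∈ Finset.range (t + 1), σ τ := hSpos t
    have hD : (∑ s ∈ Finset.range (t + 1), ℓ s (x t)) -
        (∑ s ∈ Finset.range (t + 1), ℓ s (x (t + 1)))
        ≤ ‖ℓ' t (x t)‖ * ‖x (t + 1) - x t‖ -
          (∑ τ ∈ Finset.range (t + 1), σ τ) / 2 * ‖x (t + 1) - x t‖ ^ 2 := by
      rw [hΦ1, hΦ2, hSsucc]
      nlinarith [hA, hB, hip]
    have hq : ‖ℓ' t (x t)‖ * ‖x (t + 1) - x t‖ -
        (∑ τ ∈ Finset.range (t + 1), σ τ) / 2 * ‖x (t + 1) - x t‖ ^ 2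
        ≤ 1 / 2 * (‖ℓ' t (x t)‖ ^ 2 / ∑ τ ∈ Finset.range (t + 1), σ τ) := by
      rw [show (1:ℝ) / 2 * (‖ℓ' t (x t)‖ ^ 2 / ∑ τ ∈ Finset.range (t + 1), σ τ)
          = ‖ℓ' t (x t)‖ ^ 2 / (2 * ∑ τ ∈ Finset.range (t + 1), σ τ) by ring,
        le_div_iff₀ (by linarith)]
      nlinarith [sq_nonneg (‖ℓ' t (x t)‖ - (∑ τ ∈ Finset.range (t + 1), σ τ) *
        ‖x (t + 1) - x t‖)]
    linarith
  -- Telescoping identity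
  have tele : ∀ n : ℕ, ∑ t ∈ Finset.range n, ℓ t (x t)
      = (∑ t ∈ Finset.range n, ((∑ s ∈ Finset.range (t + 1), ℓ s (x t)) -
          ∑ s ∈ Finset.range (t + 1), ℓ s (x (t + 1))))
        + ∑ s ∈ Finset.range n, ℓ s (x n) := by
    intro n
    induction n with
    | zero => simp
    | succ n ih =>
      rw [Finset.sum_range_succ, Finset.sum_range_succ _ n, ih,
        Finset.sum_range_succ (fun s => ℓ s (x (n + 1))) n]
      have e : ∑ s ∈ Finset.range (n + 1), ℓ s (x n)
          = (∑ s ∈ Finset.range n, ℓ s (x n)) + ℓ n (x n) := Finset.sum_range_succ _ _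
      rw [e]
      ring
  have h1 : ∑ s ∈ Finset.range T, ℓ s (x T) ≤ ∑ s ∈ Finset.range T, ℓ s w := hftl T w hw
  have h2 := Finset.sum_le_sum (s := Finset.range T) (fun t _ => lemB t)
  rw [← Finset.mul_sum] at h2
  linarith [tele T, h1, h2]
end

section
/- Let ℓ_1, ..., ℓ_T each be σ-strongly convex with gradients bounded in norm by G. Then the Follow-The-Leader algorithm has regret at most (G²/(2σ))(log T + 1). -/
/-!
Writing `F t = ∑_{s<t} ℓ_s` for the cumulative loss, FTL plays a minimiser `x_t` of `F t`,
and the regret against any comparator is at most `∑_t (F (t+1) (x_t) - F (t+1) (x_{t+1}))`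
("be the leader"). Since `F (t+1) = F t + ℓ_t` is `(t+1)σ`-strongly convex and `x_t` minimises
`F t` over `K`, the first-order optimality condition and Cauchy–Schwarz bound the `t`-th term
by `‖∇ℓ_t(x_t)‖² / (2(t+1)σ) ≤ G² / (2σ(t+1))`; summing gives the harmonic number `H_T ≤ log T + 1`.
-/

open scoped RealInnerProductSpace
open Finset

theorem sum_range_inv_succ_le_log_add_one (T : ℕ) :
    ∑ t ∈ range T, ((t : ℝ) + 1)⁻¹ ≤ Real.log T + 1 := by
  have h := harmonic_le_one_add_log T
  push_cast [harmonic] at h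
  linarith

theorem mul_sub_mul_sq_le_sq_div {a b r : ℝ} (ha : 0 < a) :
    b * r - a / 2 * r ^ 2 ≤ b ^ 2 / (2 * a) := by
  rw [le_div_iff₀ (by positivity)]
  nlinarith [sq_nonneg (a * r - b)]

section Gradient

variable {E : Type*} [NormedAddCommGroup E] [InnerProductSpace ℝ E] [CompleteSpace E]

theorem HasGradientAt.sum {ι : Type*} (s : Finset ι) {f : ι → E → ℝ} {f' : ι → E} {a : E}
    (hf : ∀ i ∈ s, HasGradientAt (f i) (f' i) a) :
    HasGradientAt (fun y => ∑ i ∈ s, f i y) (∑ i ∈ s, f' i) a := by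
  rw [hasGradientAt_iff_hasFDerivAt, map_sum]
  exact HasFDerivAt.fun_sum fun i hi => hasGradientAt_iff_hasFDerivAt.mp (hf i hi)

theorem IsMinOn.inner_gradient_sub_nonneg {K : Set E} (hK : Convex ℝ K) {f : E → ℝ} {g a y : E}
    (hmin : IsMinOn f K a) (hf : HasGradientAt f g a) (ha : a ∈ K) (hy : y ∈ K) :
    0 ≤ ⟪g, y - a⟫ := by
  have hcone : y - a ∈ posTangentConeAt K a :=
    sub_mem_posTangentConeAt_of_segment_subset (hK.segment_subset ha hy)
  simpa using hmin.localize.hasFDerivWithinAt_nonneg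
    (hasGradientAt_iff_hasFDerivAt.mp hf).hasFDerivWithinAt hcone

theorem IsMinOn.add_sub_add_le {K : Set E} (hK : Convex ℝ K) {f g : E → ℝ} {f' g' u v : E}
    {μ : ℝ} (hμ : 0 < μ) (hmin : IsMinOn f K v) (hf : HasGradientAt f f' v) (hv : v ∈ K)
    (hu : u ∈ K)
    (hsc : f v + g v + ⟪f' + g', u - v⟫ + μ / 2 * ‖u - v‖ ^ 2 ≤ f u + g u) :
    f v + g v - (f u + g u) ≤ ‖g'‖ ^ 2 / (2 * μ) := by
  have hopt : 0 ≤ ⟪f', u - v⟫ := hmin.inner_gradient_sub_nonneg hK hf hv hu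
  have hcs : -(‖g'‖ * ‖u - v‖) ≤ ⟪g', u - v⟫ := neg_le_of_abs_le (abs_real_inner_le_norm _ _)
  rw [inner_add_left] at hsc
  linarith [mul_sub_mul_sq_le_sq_div (b := ‖g'‖) (r := ‖u - v‖) hμ]

end Gradient

def cumLoss {α M : Type*} [AddCommMonoid M] (ℓ : ℕ → α → M) (t : ℕ) (y : α) : M :=
  ∑ s ∈ range t, ℓ s y

section CumLoss

variable {α M : Type*}

theorem cumLoss_succ [AddCommMonoid M] (ℓ : ℕ → α → M) (t : ℕ) (y : α) :
    cumLoss ℓ (t + 1) y = cumLoss ℓ t y + ℓ t y :=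
  sum_range_succ _ _

theorem sum_range_cumLoss_succ_sub [AddCommGroup M] (ℓ : ℕ → α → M) (x : ℕ → α) (T : ℕ) :
    ∑ t ∈ range T, (cumLoss ℓ (t + 1) (x t) - cumLoss ℓ (t + 1) (x (t + 1))) =
      ∑ t ∈ range T, ℓ t (x t) - cumLoss ℓ T (x T) := by
  induction T with
  | zero => simp [cumLoss]
  | succ T ih =>
    rw [sum_range_succ, ih, sum_range_succ, cumLoss_succ]
    abel

theorem sum_sub_cumLoss_le_sum_cumLoss_succ_sub (ℓ : ℕ → α → ℝ) (x : ℕ → α) (T : ℕ) (w : α)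
    (hw : cumLoss ℓ T (x T) ≤ cumLoss ℓ T w) :
    ∑ t ∈ range T, ℓ t (x t) - cumLoss ℓ T w ≤
      ∑ t ∈ range T, (cumLoss ℓ (t + 1) (x t) - cumLoss ℓ (t + 1) (x (t + 1))) := by
  rw [sum_range_cumLoss_succ_sub]
  linarith

end CumLoss

section FollowTheLeader

variable {E : Type*} [NormedAddCommGroup E] [InnerProductSpace ℝ E] {ℓ : ℕ → E → ℝ}
  {ℓ' : ℕ → E → E} {σ : ℝ}

theorem cumLoss_strongConvexity
    (hsc : ∀ t u v, ℓ t v + ⟪ℓ' t v, u - v⟫ + σ / 2 * ‖u - v‖ ^ 2 ≤ ℓ t u) (n : ℕ) (u v : E) :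
    cumLoss ℓ n v + ⟪∑ s ∈ range n, ℓ' s v, u - v⟫ + n * σ / 2 * ‖u - v‖ ^ 2 ≤
      cumLoss ℓ n u := by
  have h := sum_le_sum fun s (_ : s ∈ range n) => hsc s u v
  simp only [sum_add_distrib, ← sum_inner, sum_const, card_range, nsmul_eq_mul] at h
  unfold cumLoss
  linarith

theorem ftl_cumLoss_succ_sub_le [CompleteSpace E] {K : Set E} {x : ℕ → E} (hK : Convex ℝ K)
    (hσ : 0 < σ) (hdiff : ∀ t y, HasGradientAt (ℓ t) (ℓ' t y) y)
    (hsc : ∀ t u v, ℓ t v + ⟪ℓ' t v, u - v⟫ + σ / 2 * ‖u - v‖ ^ 2 ≤ ℓ t u)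
    (hxK : ∀ t, x t ∈ K) (hmin : ∀ t, IsMinOn (cumLoss ℓ t) K (x t)) (t : ℕ) :
    cumLoss ℓ (t + 1) (x t) - cumLoss ℓ (t + 1) (x (t + 1)) ≤
      ‖ℓ' t (x t)‖ ^ 2 / (2 * ((t + 1) * σ)) := by
  have hsc' := cumLoss_strongConvexity hsc (t + 1) (x (t + 1)) (x t)
  rw [cumLoss_succ, cumLoss_succ] at hsc' ⊢
  rw [sum_range_succ] at hsc'
  push_cast at hsc'
  refine (hmin t).add_sub_add_le hK (by positivity)
    (HasGradientAt.sum _ fun s _ => hdiff s (x t)) (hxK t) (hxK (t + 1)) ?_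
  linarith

end FollowTheLeader

theorem stmt_8_general {d : ℕ} (K : Set (EuclideanSpace ℝ (Fin d)))
    (hK : Convex ℝ K) (T : ℕ)
    (ℓ : ℕ → EuclideanSpace ℝ (Fin d) → ℝ)
    (ℓ' : ℕ → EuclideanSpace ℝ (Fin d) → EuclideanSpace ℝ (Fin d))
    (σ G : ℝ) (hσ : 0 < σ)
    (hdiff : ∀ t x, HasGradientAt (ℓ t) (ℓ' t x) x)
    (hsc : ∀ t, ∀ u v : EuclideanSpace ℝ (Fin d),
      ℓ t u ≥ ℓ t v + ⟪ℓ' t v, u - v⟫ + σ / 2 * ‖u - v‖ ^ 2)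
    (x : ℕ → EuclideanSpace ℝ (Fin d)) (hxK : ∀ t, x t ∈ K)
    (hG : ∀ t < T, ‖ℓ' t (x t)‖ ≤ G)
    (hftl : ∀ t, ∀ y ∈ K,
      ∑ s ∈ Finset.range t, ℓ s (x t) ≤ ∑ s ∈ Finset.range t, ℓ s y) :
    ∀ w ∈ K,
      ∑ t ∈ Finset.range T, ℓ t (x t) - ∑ t ∈ Finset.range T, ℓ t w ≤
        G ^ 2 / (2 * σ) * (Real.log T + 1) := by
  intro w hw
  have hmin : ∀ t, IsMinOn (cumLoss ℓ t) K (x t) := fun t => isMinOn_iff.mpr (hftl t)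
  have hstep : ∀ t < T, cumLoss ℓ (t + 1) (x t) - cumLoss ℓ (t + 1) (x (t + 1)) ≤
      G ^ 2 / (2 * σ) * ((t : ℝ) + 1)⁻¹ := fun t ht =>
    calc _ ≤ ‖ℓ' t (x t)‖ ^ 2 / (2 * ((t + 1) * σ)) :=
          ftl_cumLoss_succ_sub_le hK hσ hdiff hsc hxK hmin t
      _ ≤ G ^ 2 / (2 * ((t + 1) * σ)) := by gcongr; exact hG t ht
      _ = G ^ 2 / (2 * σ) * ((t : ℝ) + 1)⁻¹ := by field_simp
  calc _ ≤ ∑ t ∈ range T, (cumLoss ℓ (t + 1) (x t) - cumLoss ℓ (t + 1) (x (t + 1))) :=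
        sum_sub_cumLoss_le_sum_cumLoss_succ_sub ℓ x T w (hftl T w hw)
    _ ≤ ∑ t ∈ range T, G ^ 2 / (2 * σ) * ((t : ℝ) + 1)⁻¹ :=
        sum_le_sum fun t ht => hstep t (mem_range.mp ht)
    _ = G ^ 2 / (2 * σ) * ∑ t ∈ range T, ((t : ℝ) + 1)⁻¹ := (mul_sum ..).symm
    _ ≤ G ^ 2 / (2 * σ) * (Real.log T + 1) :=
        mul_le_mul_of_nonneg_left (sum_range_inv_succ_le_log_add_one T) (by positivity)

/-- FTL with `σ`-strongly convex losses and gradient norms bounded by `G` has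
regret at most `(G²/(2σ)) (log T + 1)`. -/
theorem stmt_8 {d : ℕ} (K : Set (EuclideanSpace ℝ (Fin d)))
    (hK : Convex ℝ K) (hKc : IsCompact K) (T : ℕ) (hT : 1 ≤ T)
    (ℓ : ℕ → EuclideanSpace ℝ (Fin d) → ℝ)
    (ℓ' : ℕ → EuclideanSpace ℝ (Fin d) → EuclideanSpace ℝ (Fin d))
    (σ G : ℝ) (hσ : 0 < σ)
    (hdiff : ∀ t x, HasGradientAt (ℓ t) (ℓ' t x) x)
    (hsc : ∀ t, ∀ u v : EuclideanSpace ℝ (Fin d),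
      ℓ t u ≥ ℓ t v + ⟪ℓ' t v, u - v⟫ + σ / 2 * ‖u - v‖ ^ 2)
    (x : ℕ → EuclideanSpace ℝ (Fin d)) (hxK : ∀ t, x t ∈ K)
    (hG : ∀ t < T, ‖ℓ' t (x t)‖ ≤ G)
    (hftl : ∀ t, ∀ y ∈ K,
      ∑ s ∈ Finset.range t, ℓ s (x t) ≤ ∑ s ∈ Finset.range t, ℓ s y) :
    ∀ w ∈ K,
      ∑ t ∈ Finset.range T, ℓ t (x t) - ∑ t ∈ Finset.range T, ℓ t w ≤
        G ^ 2 / (2 * σ) * (Real.log T + 1) :=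
  stmt_8_general K hK T ℓ ℓ' σ G hσ hdiff hsc x hxK hG hftl
end

section
/- Under the hypotheses of the weighted no-regret equilibrium theorem, the averaged iterates satisfy the sandwich: V* − ε ≤ inf_{x ∈ X} g(x, ȳ) ≤ V* ≤ sup_{y ∈ Y} g(x̄, y) ≤ V* + ε, where ε is the sum of the weighted average regrets of the two players. -/
/-- The `ε`-sandwich around the game value `V*` for the averaged iterates of weighted
no-regret dynamics:
`V* − ε ≤ inf_x g(x, ȳ) ≤ V* ≤ sup_y g(x̄, y) ≤ V* + ε`. -/
theorem stmt_12 {n m : ℕ} (X : Set (EuclideanSpace ℝ (Fin n)))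
    (Y : Set (EuclideanSpace ℝ (Fin m)))
    (hX : Convex ℝ X) (hXc : IsCompact X) (hXne : X.Nonempty)
    (hY : Convex ℝ Y) (hYc : IsCompact Y) (hYne : Y.Nonempty)
    (g : EuclideanSpace ℝ (Fin n) → EuclideanSpace ℝ (Fin m) → ℝ)
    (hconv : ∀ y ∈ Y, ConvexOn ℝ X (fun x => g x y))
    (hconc : ∀ x ∈ X, ConcaveOn ℝ Y (fun y => g x y))
    (V : ℝ) (x0 : EuclideanSpace ℝ (Fin n)) (y0 : EuclideanSpace ℝ (Fin m))
    (hx0 : x0 ∈ X) (hy0 : y0 ∈ Y)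
    (hsaddle : ∀ x ∈ X, ∀ y ∈ Y, g x0 y ≤ V ∧ V ≤ g x y0)
    (T : ℕ) (hT : 0 < T) (α : ℕ → ℝ) (hα : ∀ t, 0 < α t)
    (x : ℕ → EuclideanSpace ℝ (Fin n)) (y : ℕ → EuclideanSpace ℝ (Fin m))
    (hx : ∀ t, x t ∈ X) (hy : ∀ t, y t ∈ Y)
    (xstar : EuclideanSpace ℝ (Fin n)) (hxs : xstar ∈ X)
    (hxsmin : ∀ w ∈ X, ∑ t ∈ Finset.range T, α t * g xstar (y t) ≤
      ∑ t ∈ Finset.range T, α t * g w (y t))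
    (ystar : EuclideanSpace ℝ (Fin m)) (hys : ystar ∈ Y)
    (hysmax : ∀ w ∈ Y, ∑ t ∈ Finset.range T, α t * g (x t) w ≤
      ∑ t ∈ Finset.range T, α t * g (x t) ystar)
    (Rx Ry AT ε : ℝ)
    (hRx : Rx = ∑ t ∈ Finset.range T, α t * g (x t) (y t) -
      ∑ t ∈ Finset.range T, α t * g xstar (y t))
    (hRy : Ry = ∑ t ∈ Finset.range T, α t * g (x t) ystar -
      ∑ t ∈ Finset.range T, α t * g (x t) (y t))
    (hAT : AT = ∑ t ∈ Finset.range T, α t)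
    (hε : ε = (Rx + Ry) / AT) :
    V - ε ≤ sInf ((fun x' => g x' (AT⁻¹ • ∑ t ∈ Finset.range T, α t • y t)) '' X) ∧
    sInf ((fun x' => g x' (AT⁻¹ • ∑ t ∈ Finset.range T, α t • y t)) '' X) ≤ V ∧
    V ≤ sSup ((fun y' => g (AT⁻¹ • ∑ t ∈ Finset.range T, α t • x t) y') '' Y) ∧
    sSup ((fun y' => g (AT⁻¹ • ∑ t ∈ Finset.range T, α t • x t) y') '' Y) ≤ V + ε := by
  have hATpos : 0 < AT := by
    rw [hAT]
    exact Finset.sum_pos (fun t _ => hα t) (Finset.nonempty_range_iff.mpr hT.ne')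
  set w : ℕ → ℝ := fun t => AT⁻¹ * α t with hw
  have hw0 : ∀ t ∈ Finset.range T, 0 ≤ w t :=
    fun t _ => mul_nonneg (inv_nonneg.mpr hATpos.le) (hα t).le
  have hw1 : ∑ t ∈ Finset.range T, w t = 1 := by
    rw [← Finset.mul_sum, ← hAT, inv_mul_cancel₀ hATpos.ne']
  set xb := AT⁻¹ • ∑ t ∈ Finset.range T, α t • x t with hxb
  set yb := AT⁻¹ • ∑ t ∈ Finset.range T, α t • y t with hyb
  have hxbeq : xb = ∑ t ∈ Finset.range T, w t • x t := by
    rw [hxb, Finset.smul_sum]; simp [hw, smul_smul]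
  have hybeq : yb = ∑ t ∈ Finset.range T, w t • y t := by
    rw [hyb, Finset.smul_sum]; simp [hw, smul_smul]
  have hxbX : xb ∈ X := by
    rw [hxbeq]; exact hX.sum_mem hw0 hw1 (fun t _ => hx t)
  have hybY : yb ∈ Y := by
    rw [hybeq]; exact hY.sum_mem hw0 hw1 (fun t _ => hy t)
  -- sum bound for x t plays against any y
  have hsum_le : ∀ y' ∈ Y, ∑ t ∈ Finset.range T, α t * g (x t) y' ≤ Rx + Ry + AT * V := by
    intro y' hy'
    have h1 := hysmax y' hy'
    have h2 := hxsmin x0 hx0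
    have h3 : ∑ t ∈ Finset.range T, α t * g x0 (y t) ≤ AT * V := by
      rw [hAT, Finset.sum_mul]
      exact Finset.sum_le_sum fun t _ =>
        mul_le_mul_of_nonneg_left ((hsaddle (x t) (hx t) (y t) (hy t)).1) (hα t).le
    have := h2.trans h3
    nlinarith [h1]
  have hsum_ge : ∀ x' ∈ X, AT * V - Rx - Ry ≤ ∑ t ∈ Finset.range T, α t * g x' (y t) := by
    intro x' hx'
    have h1 := hxsmin x' hx'
    have h2 := hysmax y0 hy0
    have h3 : AT * V ≤ ∑ t ∈ Finset.range T, α t * g (x t) y0 := by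
      rw [hAT, Finset.sum_mul]
      exact Finset.sum_le_sum fun t _ =>
        mul_le_mul_of_nonneg_left ((hsaddle (x t) (hx t) y0 hy0).2) (hα t).le
    nlinarith [h1]
  -- pointwise upper bound: g x̄ y' ≤ V + ε
  have hup : ∀ y' ∈ Y, g xb y' ≤ V + ε := by
    intro y' hy'
    have hJ := (hconv y' hy').map_sum_le hw0 hw1 (fun t _ => hx t)
    rw [← hxbeq] at hJ
    have : ∑ t ∈ Finset.range T, w t • g (x t) y'
        = AT⁻¹ * ∑ t ∈ Finset.range T, α t * g (x t) y' := by
      rw [Finset.mul_sum]; simp [hw, mul_assoc]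
    rw [this] at hJ
    have hb := hsum_le y' hy'
    have : AT⁻¹ * ∑ t ∈ Finset.range T, α t * g (x t) y'
        ≤ AT⁻¹ * (Rx + Ry + AT * V) :=
      mul_le_mul_of_nonneg_left hb (inv_nonneg.mpr hATpos.le)
    have heq : AT⁻¹ * (Rx + Ry + AT * V) = V + ε := by
      rw [hε]; field_simp; ring
    linarith [hJ.trans this]
  -- pointwise lower bound: V - ε ≤ g x' ȳ
  have hlo : ∀ x' ∈ X, V - ε ≤ g x' yb := by
    intro x' hx'
    have hJ := (hconc x' hx').le_map_sum hw0 hw1 (fun t _ => hy t)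
    rw [← hybeq] at hJ
    have heq2 : ∑ t ∈ Finset.range T, w t • g x' (y t)
        = AT⁻¹ * ∑ t ∈ Finset.range T, α t * g x' (y t) := by
      rw [Finset.mul_sum]; simp [hw, mul_assoc]
    rw [heq2] at hJ
    have hb := hsum_ge x' hx'
    have : AT⁻¹ * (AT * V - Rx - Ry) ≤ AT⁻¹ * ∑ t ∈ Finset.range T, α t * g x' (y t) :=
      mul_le_mul_of_nonneg_left hb (inv_nonneg.mpr hATpos.le)
    have heq : AT⁻¹ * (AT * V - Rx - Ry) = V - ε := by
      rw [hε]; field_simp; ring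
    linarith [this.trans hJ]
  have himXne : ((fun x' => g x' yb) '' X).Nonempty := hXne.image _
  have himYne : ((fun y' => g xb y') '' Y).Nonempty := hYne.image _
  have hbddX : BddBelow ((fun x' => g x' yb) '' X) :=
    ⟨V - ε, by rintro _ ⟨x', hx', rfl⟩; exact hlo x' hx'⟩
  have hbddY : BddAbove ((fun y' => g xb y') '' Y) :=
    ⟨V + ε, by rintro _ ⟨y', hy', rfl⟩; exact hup y' hy'⟩
  refine ⟨?_, ?_, ?_, ?_⟩
  · exact le_csInf himXne (by rintro _ ⟨x', hx', rfl⟩; exact hlo x' hx')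
  · exact (csInf_le hbddX ⟨x0, hx0, rfl⟩).trans (hsaddle x0 hx0 yb hybY).1
  · exact le_csSup_of_le hbddY ⟨y0, hy0, rfl⟩ (hsaddle xb hxbX y0 hy0).2
  · exact csSup_le himYne (by rintro _ ⟨y', hy', rfl⟩; exact hup y' hy')
end

section
/- Let K be a closed convex set containing the origin with gauge function γ_K(x) = inf{c ≥ 0 : x/c ∈ K}. For linear loss L ∈ ℝ^d and η > 0, the minimization min_{x ∈ K} η⟨L, x⟩ + γ_K(x)² is solved by x = ρ z*, where z* = argmin_{z ∈ K} ⟨L, z⟩ and ρ = max(0, min(1, −(η/2)⟨L, z*⟩)). -/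
open scoped RealInnerProductSpace Topology

/-- Gauge-squared regularized FTRL with linear loss is solved via one linear
optimization call: the minimizer of `η⟨L, x⟩ + γ_K(x)²` over `K` is `ρ • z*` where
`z*` minimizes `⟨L, ·⟩` over `K` (attained on the boundary) and
`ρ = max 0 (min 1 (−(η/2)⟨L, z*⟩))`. -/
theorem stmt_13 {d : ℕ} (K : Set (EuclideanSpace ℝ (Fin d)))
    (hKcl : IsClosed K) (hK : Convex ℝ K) (hKb : Bornology.IsBounded K)
    (h0 : (0 : EuclideanSpace ℝ (Fin d)) ∈ interior K)
    (L : EuclideanSpace ℝ (Fin d)) (η : ℝ) (hη : 0 < η)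
    (zstar : EuclideanSpace ℝ (Fin d)) (hzK : zstar ∈ K)
    (hzb : zstar ∈ frontier K)
    (hzmin : ∀ z ∈ K, ⟪L, zstar⟫ ≤ ⟪L, z⟫) :
    let ρ : ℝ := max 0 (min 1 (-(η / 2) * ⟪L, zstar⟫))
    ρ • zstar ∈ K ∧
      ∀ x ∈ K, η * ⟪L, ρ • zstar⟫ + gauge K (ρ • zstar) ^ 2 ≤
        η * ⟪L, x⟫ + gauge K x ^ 2 := by
  intro ρ
  set a : ℝ := ⟪L, zstar⟫ with ha_def
  have hK0 : K ∈ 𝓝 (0 : EuclideanSpace ℝ (Fin d)) := mem_interior_iff_mem_nhds.1 h0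
  have habs : Absorbent ℝ K := absorbent_nhds_zero hK0
  have h0K : (0 : EuclideanSpace ℝ (Fin d)) ∈ K := interior_subset h0
  have ha : a ≤ 0 := by simpa using hzmin 0 h0K
  have hg1 : gauge K zstar = 1 := (gauge_eq_one_iff_mem_frontier hK hK0).2 hzb
  have ht0 : 0 ≤ -(η / 2) * a := by nlinarith
  have hρeq : ρ = min 1 (-(η / 2) * a) := max_eq_right (le_min zero_le_one ht0)
  have hρ0 : 0 ≤ ρ := le_max_left _ _
  have hρ1 : ρ ≤ 1 := max_le zero_le_one (min_le_left _ _)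
  have hmem : ρ • zstar ∈ K := by
    have := hK h0K hzK (by linarith : (0:ℝ) ≤ 1 - ρ) hρ0 (by ring)
    simpa using this
  refine ⟨hmem, ?_⟩
  intro x hx
  set g : ℝ := gauge K x with hg_def
  have hg0 : 0 ≤ g := gauge_nonneg x
  have hgle : g ≤ 1 := gauge_le_one_of_mem hx
  -- key linear lower bound: g * a ≤ ⟪L, x⟫
  have hstep : ∀ c : ℝ, g < c → c * a ≤ ⟪L, x⟫ := by
    intro c hc
    obtain ⟨b, hb0, hbc, hbmem⟩ := exists_lt_of_gauge_lt habs hc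
    obtain ⟨y, hy, hxy⟩ := hbmem
    have hinner : ⟪L, x⟫ = b * ⟪L, y⟫ := by
      rw [← hxy, real_inner_smul_right]
    have hya : a ≤ ⟪L, y⟫ := hzmin y hy
    nlinarith [hinner, hya]
  have key : g * a ≤ ⟪L, x⟫ := by
    rcases lt_or_eq_of_le ha with haneg | ha0
    · by_contra hcon
      push_neg at hcon
      have h1 : g < ⟪L, x⟫ / a := (lt_div_iff_of_neg haneg).2 hcon
      obtain ⟨c, hc1, hc2⟩ := exists_between h1
      have h2 : ⟪L, x⟫ < c * a := (lt_div_iff_of_neg haneg).1 hc2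
      have := hstep c hc1
      linarith
    · have := hstep (g + 1) (by linarith)
      rw [ha0] at this ⊢
      simpa using this
  have hgaugesmul : gauge K (ρ • zstar) = ρ := by
    rw [gauge_smul_of_nonneg hρ0, hg1]
    simp
  rw [hgaugesmul, real_inner_smul_right]
  have hobj : η * (ρ * a) + ρ ^ 2 ≤ η * (g * a) + g ^ 2 := by
    rcases min_cases 1 (-(η / 2) * a) with ⟨h1, h2⟩ | ⟨h1, h2⟩ <;>
      rw [h1] at hρeq <;> rw [hρeq]
    · nlinarith [mul_nonneg (by linarith : (0:ℝ) ≤ 1 - g)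
        (by linarith : (0:ℝ) ≤ -(g + 1 + η * a))]
    · nlinarith [sq_nonneg (g + η / 2 * a)]
  have : η * (g * a) ≤ η * ⟪L, x⟫ := by nlinarith
  linarith
end

section
/- Let g(x, y) = a(x) + xᵀM y − b(y) where a is σ_x-strongly convex and differentiable, M is a matrix, and b is σ_y-strongly convex, with y ranging over a convex set Y on which the maximum defining s(x) = max_{y ∈ Y} g(x, y) is attained at y_x. If additionally x ↦ ∇_x g(x, y) is L-Lipschitz uniformly in y (with respect to the Euclidean norm), then s is differentiable with ∇s(x) = ∇_x g(x, y_x), and ‖∇s(w) − ∇s(z)‖ ≤ (‖M‖²/σ_y + L)‖w − z‖ for all w, z; i.e., s is (‖M‖²/σ_y + L)-smooth. -/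
open scoped RealInnerProductSpace
open Filter Asymptotics Topology

set_option maxHeartbeats 1000000

/-- For `g(x,y) = a(x) + ⟨x, M y⟩ − b(y)` with `a` strongly convex, `b` `σ_y`-strongly
convex on `Y`, and `∇_x g(·, y) = a'(·) + M y` being `L`-Lipschitz uniformly in `y`,
the max-function `s(x) = max_{y ∈ Y} g(x,y)` is differentiable with
`∇s(x) = a'(x) + M y_x` and is `(‖M‖²/σ_y + L)`-smooth. -/
theorem stmt_16 {n m : ℕ} (Y : Set (EuclideanSpace ℝ (Fin m)))
    (hY : Convex ℝ Y) (hYne : Y.Nonempty)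
    (M : EuclideanSpace ℝ (Fin m) →L[ℝ] EuclideanSpace ℝ (Fin n))
    (a : EuclideanSpace ℝ (Fin n) → ℝ)
    (a' : EuclideanSpace ℝ (Fin n) → EuclideanSpace ℝ (Fin n))
    (b : EuclideanSpace ℝ (Fin m) → ℝ)
    (σx σy L : ℝ) (hσx : 0 < σx) (hσy : 0 < σy) (hL : 0 ≤ L)
    (hadiff : ∀ x, HasGradientAt a (a' x) x)
    (hasc : ∀ u v, a u ≥ a v + ⟪a' v, u - v⟫ + σx / 2 * ‖u - v‖ ^ 2)
    (haL : ∀ w z, ‖a' w - a' z‖ ≤ L * ‖w - z‖)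
    (hbsc : ∀ u ∈ Y, ∀ v ∈ Y, ∀ θ : ℝ, θ ∈ Set.Icc (0:ℝ) 1 →
      b (θ • u + (1 - θ) • v) ≤
        θ * b u + (1 - θ) * b v - σy / 2 * θ * (1 - θ) * ‖u - v‖ ^ 2)
    (g : EuclideanSpace ℝ (Fin n) → EuclideanSpace ℝ (Fin m) → ℝ)
    (hg : ∀ x y, g x y = a x + ⟪x, M y⟫ - b y)
    (yx : EuclideanSpace ℝ (Fin n) → EuclideanSpace ℝ (Fin m))
    (hyxY : ∀ x, yx x ∈ Y)
    (hyxmax : ∀ x, ∀ y ∈ Y, g x y ≤ g x (yx x))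
    (s : EuclideanSpace ℝ (Fin n) → ℝ)
    (hs : ∀ x, s x = g x (yx x)) :
    (∀ x, HasGradientAt s (a' x + M (yx x)) x) ∧
    (∀ w z, ‖(a' w + M (yx w)) - (a' z + M (yx z))‖ ≤
      (‖M‖ ^ 2 / σy + L) * ‖w - z‖) := by
  -- Step 1: quadratic growth at the maximizer
  have quad : ∀ x, ∀ y ∈ Y, g x y + σy / 2 * ‖y - yx x‖ ^ 2 ≤ g x (yx x) := by
    intro x y hy
    set K : ℝ := σy / 2 * ‖y - yx x‖ ^ 2 with hKdef
    have key : ∀ θ : ℝ, θ ∈ Set.Ioc (0:ℝ) 1 →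
        g x y + (1 - θ) * K ≤ g x (yx x) := by
      intro θ hθ
      obtain ⟨hθ0, hθ1⟩ := hθ
      have hmemY : θ • y + (1 - θ) • yx x ∈ Y :=
        hY hy (hyxY x) hθ0.le (by linarith) (by ring)
      have hb := hbsc y hy (yx x) (hyxY x) θ ⟨hθ0.le, hθ1⟩
      have hmax := hyxmax x _ hmemY
      have hMlin : ⟪x, M (θ • y + (1 - θ) • yx x)⟫
          = θ * ⟪x, M y⟫ + (1 - θ) * ⟪x, M (yx x)⟫ := by
        rw [map_add, map_smul, map_smul, inner_add_right,
          real_inner_smul_right, real_inner_smul_right]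
      simp only [hg] at hmax
      rw [hMlin] at hmax
      rw [hg x y, hg x (yx x)]
      have h1 : θ * ((a x + ⟪x, M y⟫ - b y) + (1 - θ) * K)
          ≤ θ * (a x + ⟪x, M (yx x)⟫ - b (yx x)) := by
        rw [hKdef]; nlinarith [hb, hmax]
      exact le_of_mul_le_mul_left h1 hθ0
    have hcont : Filter.Tendsto (fun θ : ℝ => g x y + (1 - θ) * K)
        (nhdsWithin (0:ℝ) (Set.Ioi 0)) (nhds (g x y + K)) := by
      have hc : Continuous fun θ : ℝ => g x y + (1 - θ) * K := by continuity
      have h1 : Filter.Tendsto (fun θ : ℝ => g x y + (1 - θ) * K)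
          (nhdsWithin (0:ℝ) (Set.Ioi 0)) (nhds (g x y + (1 - 0) * K)) :=
        (hc.tendsto 0).mono_left nhdsWithin_le_nhds
      simpa using h1
    exact le_of_tendsto hcont
      (Filter.eventually_of_mem (Ioc_mem_nhdsGT_of_mem ⟨le_refl 0, zero_lt_one⟩) key)
  -- Step 2: Lipschitz stability of the maximizer
  have hd : ∀ w z, ‖yx w - yx z‖ ≤ ‖M‖ / σy * ‖w - z‖ := by
    intro w z
    have h1 := quad w (yx z) (hyxY z)
    have h2 := quad z (yx w) (hyxY w)
    rw [hg, hg] at h1 h2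
    have hrev : ‖yx z - yx w‖ = ‖yx w - yx z‖ := norm_sub_rev _ _
    rw [hrev] at h1
    set d : ℝ := ‖yx w - yx z‖ with hddef
    have hip : ⟪w - z, M (yx w) - M (yx z)⟫
        = (⟪w, M (yx w)⟫ - ⟪w, M (yx z)⟫) - (⟪z, M (yx w)⟫ - ⟪z, M (yx z)⟫) := by
      simp only [inner_sub_left, inner_sub_right]
      try ring
    have hcs : ⟪w - z, M (yx w) - M (yx z)⟫ ≤ ‖w - z‖ * (‖M‖ * d) := by
      calc ⟪w - z, M (yx w) - M (yx z)⟫ ≤ ‖w - z‖ * ‖M (yx w) - M (yx z)‖ :=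
            real_inner_le_norm _ _
        _ ≤ ‖w - z‖ * (‖M‖ * d) := by
            apply mul_le_mul_of_nonneg_left _ (norm_nonneg _)
            rw [← map_sub]
            exact M.le_opNorm _
    have hσd : σy * d ^ 2 ≤ ‖w - z‖ * (‖M‖ * d) := by nlinarith [hip, hcs, h1, h2]
    rcases eq_or_lt_of_le (norm_nonneg (yx w - yx z)) with h0 | h0
    · rw [hddef, ← h0]
      positivity
    · rw [div_mul_eq_mul_div, le_div_iff₀ hσy]
      nlinarith [h0, hσd]
  constructor
  · -- differentiability
    intro x₀
    rw [hasGradientAt_iff_isLittleO]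
    have hA : (fun x' => a x' - a x₀ - ⟪a' x₀, x' - x₀⟫)
        =o[nhds x₀] fun x' => x' - x₀ := hasGradientAt_iff_isLittleO.mp (hadiff x₀)
    set R : EuclideanSpace ℝ (Fin n) → ℝ :=
      fun x' => (s x' - a x') - (s x₀ - a x₀) - ⟪x' - x₀, M (yx x₀)⟫ with hRdef
    have hRlow : ∀ x', 0 ≤ R x' := by
      intro x'
      have h1 := hyxmax x' (yx x₀) (hyxY x₀)
      rw [hg, ← hs] at h1
      have h2 : s x₀ - a x₀ = ⟪x₀, M (yx x₀)⟫ - b (yx x₀) := by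
        rw [hs, hg]; ring
      simp only [hRdef, inner_sub_left]
      nlinarith [h1, h2]
    have hRup : ∀ x', R x' ≤ ‖M‖ ^ 2 / σy * ‖x' - x₀‖ ^ 2 := by
      intro x'
      have h1 : s x' - a x' = ⟪x', M (yx x')⟫ - b (yx x') := by
        rw [hs, hg]; ring
      have h2 := hyxmax x₀ (yx x') (hyxY x')
      rw [hg, ← hs] at h2
      have h3 : R x' ≤ ⟪x' - x₀, M (yx x') - M (yx x₀)⟫ := by
        simp only [hRdef, inner_sub_left, inner_sub_right]
        nlinarith [h1, h2]
      have h4 : ⟪x' - x₀, M (yx x') - M (yx x₀)⟫ ≤ ‖x' - x₀‖ * (‖M‖ * ‖yx x' - yx x₀‖) := by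
        calc ⟪x' - x₀, M (yx x') - M (yx x₀)⟫ ≤ ‖x' - x₀‖ * ‖M (yx x') - M (yx x₀)‖ :=
              real_inner_le_norm _ _
          _ ≤ _ := by
              apply mul_le_mul_of_nonneg_left _ (norm_nonneg _)
              rw [← map_sub]; exact M.le_opNorm _
      have h5 := hd x' x₀
      have h6 : ‖M‖ * ‖yx x' - yx x₀‖ ≤ ‖M‖ * (‖M‖ / σy * ‖x' - x₀‖) :=
        mul_le_mul_of_nonneg_left h5 (norm_nonneg _)
      calc R x' ≤ ‖x' - x₀‖ * (‖M‖ * ‖yx x' - yx x₀‖) := le_trans h3 h4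
        _ ≤ ‖x' - x₀‖ * (‖M‖ * (‖M‖ / σy * ‖x' - x₀‖)) :=
            mul_le_mul_of_nonneg_left h6 (norm_nonneg _)
        _ = ‖M‖ ^ 2 / σy * ‖x' - x₀‖ ^ 2 := by ring
    have hR : R =o[nhds x₀] fun x' => x' - x₀ := by
      have hbig : R =O[nhds x₀] fun x' => ‖x' - x₀‖ ^ 2 := by
        rw [isBigO_iff]
        refine ⟨‖M‖ ^ 2 / σy, Filter.Eventually.of_forall fun x' => ?_⟩
        rw [Real.norm_of_nonneg (hRlow x'), Real.norm_of_nonneg (by positivity)]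
        exact hRup x'
      exact hbig.trans_isLittleO (isLittleO_pow_sub_sub x₀ one_lt_two)
    have := hA.add hR
    apply this.congr' _ (Filter.EventuallyEq.refl _ _)
    apply Filter.Eventually.of_forall
    intro x'
    simp only [hRdef, inner_add_left]
    rw [real_inner_comm (M (yx x₀)) (x' - x₀)]
    ring
  · -- smoothness constant
    intro w z
    calc ‖(a' w + M (yx w)) - (a' z + M (yx z))‖
        ≤ ‖a' w - a' z‖ + ‖M (yx w) - M (yx z)‖ := by
          have : (a' w + M (yx w)) - (a' z + M (yx z))
              = (a' w - a' z) + (M (yx w) - M (yx z)) := by abel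
          rw [this]; exact norm_add_le _ _
      _ ≤ L * ‖w - z‖ + ‖M‖ * (‖M‖ / σy * ‖w - z‖) := by
          gcongr
          · exact haL w z
          · rw [← map_sub]
            exact le_trans (M.le_opNorm _) (mul_le_mul_of_nonneg_left (hd w z) (norm_nonneg _))
      _ = (‖M‖ ^ 2 / σy + L) * ‖w - z‖ := by
          field_simp; ring
end

section
/- Suppose g(x, y) is σ_y-strongly concave in y, the best response y_x = argmax_{y} g(x, y) is attained in the interior of Y for every x ∈ X (so ∇_y g(x, y_x) = 0), and for all w, z ∈ X, ‖∇_y g(w, ·)|_{y_z} − ∇_y g(z, ·)|_{y_z}‖ ≤ L‖w − z‖. Then ‖y_w − y_z‖ ≤ (2L/σ_y)‖w − z‖ for all w, z ∈ X. -/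
open scoped RealInnerProductSpace

/-- If `g(x, ·)` is `σ_y`-strongly concave, best responses `y_x` lie in the interior of
`Y` (so `∇_y g(x, y_x) = 0`), and `w ↦ ∇_y g(w, ·)|_{y_z}` is `L`-Lipschitz, then the
best-response map is `(2L/σ_y)`-Lipschitz. -/
theorem stmt_17 {n m : ℕ} (X : Set (EuclideanSpace ℝ (Fin n)))
    (Y : Set (EuclideanSpace ℝ (Fin m))) (hY : Convex ℝ Y)
    (g : EuclideanSpace ℝ (Fin n) → EuclideanSpace ℝ (Fin m) → ℝ)
    (gy : EuclideanSpace ℝ (Fin n) → EuclideanSpace ℝ (Fin m) →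
      EuclideanSpace ℝ (Fin m))
    (σy L : ℝ) (hσy : 0 < σy) (hL : 0 ≤ L)
    (hdiff : ∀ x y, HasGradientAt (g x) (gy x y) y)
    (hconc : ∀ x, ∀ u ∈ Y, ∀ v ∈ Y,
      g x u ≤ g x v + ⟪gy x v, u - v⟫ - σy / 2 * ‖u - v‖ ^ 2)
    (yx : EuclideanSpace ℝ (Fin n) → EuclideanSpace ℝ (Fin m))
    (hyxint : ∀ x ∈ X, yx x ∈ interior Y)
    (hyxmax : ∀ x ∈ X, ∀ y ∈ Y, g x y ≤ g x (yx x))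
    (hgrad0 : ∀ x ∈ X, gy x (yx x) = 0)
    (hLip : ∀ w ∈ X, ∀ z ∈ X, ‖gy w (yx z) - gy z (yx z)‖ ≤ L * ‖w - z‖) :
    ∀ w ∈ X, ∀ z ∈ X, ‖yx w - yx z‖ ≤ (2 * L / σy) * ‖w - z‖ := by
  intro w hw z hz
  have haY : yx w ∈ Y := interior_subset (hyxint w hw)
  have hbY : yx z ∈ Y := interior_subset (hyxint z hz)
  have h1 := hconc w (yx z) hbY (yx w) haY
  have h2 := hconc w (yx w) haY (yx z) hbY
  rw [hgrad0 w hw] at h1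
  simp only [inner_zero_left] at h1
  have hnorm : ‖yx z - yx w‖ = ‖yx w - yx z‖ := norm_sub_rev _ _
  have hinner : ⟪gy w (yx z), yx w - yx z⟫ = ⟪gy w (yx z) - gy z (yx z), yx w - yx z⟫ := by
    rw [hgrad0 z hz]; simp
  have hcs : ⟪gy w (yx z) - gy z (yx z), yx w - yx z⟫ ≤ ‖gy w (yx z) - gy z (yx z)‖ * ‖yx w - yx z‖ :=
    real_inner_le_norm _ _
  have hlip := hLip w hw z hz
  rw [hnorm] at h1
  have key : σy * ‖yx w - yx z‖ ^ 2 ≤ L * ‖w - z‖ * ‖yx w - yx z‖ := by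
    nlinarith [mul_le_mul_of_nonneg_right hlip (norm_nonneg (yx w - yx z))]
  rcases eq_or_lt_of_le (norm_nonneg (yx w - yx z)) with h0 | h0
  · rw [← h0]
    positivity
  · have hmain : σy * ‖yx w - yx z‖ ≤ L * ‖w - z‖ := by
      nlinarith
    rw [div_mul_eq_mul_div, le_div_iff₀ hσy]
    nlinarith [norm_nonneg (w - z)]
end

section
/- Let f be L-smooth, let Y be a λ-strongly convex compact set, and suppose ‖∇f(y)‖ ≥ B > 0 for all y ∈ Y. In the Frank-Wolfe game g(x, y) = f*(x) − ⟨x, y⟩ where y_t is the best response argmax_{y ∈ Y}⟨−x_t, y⟩ (plus f*(x_t), which does not affect the argmax), and x_t = ∇f(ȳ_{t−1}) for weighted averages ȳ with weights α_t = t, consecutive best responses satisfy ‖y_t − y_{t−1}‖ ≤ 2L‖ȳ_{t−1} − ȳ_{t−2}‖/(λ(‖∇f(ȳ_{t−1})‖ + ‖∇f(ȳ_{t−2})‖)) = O(L/(λ t B)). -/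
open scoped RealInnerProductSpace

lemma argmax_key {d : ℕ} (Y : Set (EuclideanSpace ℝ (Fin d))) (lam : ℝ) (hlam : 0 < lam)
    (hY : ∀ u ∈ Y, ∀ v ∈ Y, ∀ θ : ℝ, θ ∈ Set.Icc (0:ℝ) 1 →
      Metric.closedBall (θ • u + (1 - θ) • v) (θ * (1 - θ) * (lam / 2) * ‖u - v‖ ^ 2) ⊆ Y)
    (a y₁ y₂ : EuclideanSpace ℝ (Fin d)) (ha : a ≠ 0)
    (hy1 : y₁ ∈ Y) (hy2 : y₂ ∈ Y)
    (hmax : ∀ y ∈ Y, ⟪a, y⟫ ≤ ⟪a, y₁⟫) :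
    lam / 2 * ‖y₁ - y₂‖ ^ 2 * ‖a‖ ≤ ⟪a, y₁ - y₂⟫ := by
  have hna : (0:ℝ) < ‖a‖ := norm_pos_iff.mpr ha
  set D : ℝ := ‖y₁ - y₂‖ with hD
  have hDnn : 0 ≤ D := norm_nonneg _
  have key : ∀ θ : ℝ, 0 ≤ θ → θ < 1 → θ * (lam / 2 * D ^ 2 * ‖a‖) ≤ ⟪a, y₁ - y₂⟫ := by
    intro θ hθ0 hθ1
    set r : ℝ := θ * (1 - θ) * (lam / 2) * D ^ 2 with hr
    have hrnn : 0 ≤ r := mul_nonneg (mul_nonneg (mul_nonneg hθ0 (by linarith)) (half_pos hlam).le) (sq_nonneg D)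
    set c : EuclideanSpace ℝ (Fin d) := θ • y₁ + (1 - θ) • y₂ with hc
    set p : EuclideanSpace ℝ (Fin d) := c + r • (‖a‖⁻¹ • a) with hp
    have hpmem : p ∈ Metric.closedBall c r := by
      simp only [Metric.mem_closedBall, dist_eq_norm, hp, add_sub_cancel_left]
      rw [norm_smul, norm_smul, norm_inv, norm_norm]
      rw [Real.norm_of_nonneg hrnn]
      rw [inv_mul_cancel₀ (ne_of_gt hna), mul_one]
    have hpY : p ∈ Y := hY y₁ hy1 y₂ hy2 θ ⟨hθ0, hθ1.le⟩ hpmem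
    have h1 := hmax p hpY
    have hip : ⟪a, p⟫ = θ * ⟪a, y₁⟫ + (1 - θ) * ⟪a, y₂⟫ + r * ‖a‖ := by
      simp only [hp, hc, inner_add_right, inner_smul_right, real_inner_self_eq_norm_sq]
      field_simp
    rw [hip] at h1
    have h2 : r * ‖a‖ ≤ (1 - θ) * (⟪a, y₁⟫ - ⟪a, y₂⟫) := by nlinarith
    have h3 : (1 - θ) * (θ * (lam / 2 * D ^ 2 * ‖a‖)) ≤ (1 - θ) * (⟪a, y₁⟫ - ⟪a, y₂⟫) := by
      calc (1 - θ) * (θ * (lam / 2 * D ^ 2 * ‖a‖)) = r * ‖a‖ := by rw [hr]; ring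
      _ ≤ _ := h2
    have h4 := le_of_mul_le_mul_left (by linarith [h3] : (1 - θ) * (θ * (lam / 2 * D ^ 2 * ‖a‖)) ≤ (1 - θ) * (⟪a, y₁⟫ - ⟪a, y₂⟫)) (by linarith : (0:ℝ) < 1 - θ)
    calc θ * (lam / 2 * D ^ 2 * ‖a‖) ≤ ⟪a, y₁⟫ - ⟪a, y₂⟫ := h4
    _ = ⟪a, y₁ - y₂⟫ := by rw [inner_sub_right]
  have hK0 : 0 ≤ ⟪a, y₁ - y₂⟫ := by
    have := key (1/2) (by norm_num) (by norm_num)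
    nlinarith [mul_nonneg (mul_nonneg (le_of_lt (by positivity : (0:ℝ) < lam/2)) (sq_nonneg D)) hna.le]
  set c0 : ℝ := lam / 2 * D ^ 2 * ‖a‖ with hc0
  have hc0nn : 0 ≤ c0 := by positivity
  refine le_of_forall_pos_le_add ?_
  intro ε hε
  rcases le_or_gt c0 ε with h | h
  · linarith
  · have hc0pos : 0 < c0 := lt_trans hε h
    have := key (1 - ε / c0) (by
      have : ε / c0 ≤ 1 := (div_le_one hc0pos).mpr h.le
      linarith) (by
      have : 0 < ε / c0 := div_pos hε hc0pos
      linarith)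
    have heq : (1 - ε / c0) * c0 = c0 - ε := by field_simp
    linarith [heq ▸ this]

/-- Shrinkage of consecutive best responses in the Frank-Wolfe game on a `λ`-strongly
convex set: if `x_i = ∇f(w_i)` with `f` `L`-smooth and `‖∇f‖ ≥ B` on `Y`, and `y_i` is
the best response `argmax_{y ∈ Y} ⟨−x_i, y⟩`, then
`‖y₁ − y₂‖ ≤ 2L‖w₁ − w₂‖ / (λ(‖∇f(w₁)‖ + ‖∇f(w₂)‖)) ≤ L‖w₁ − w₂‖/(λB)`. -/
theorem stmt_18 {d : ℕ} (Y : Set (EuclideanSpace ℝ (Fin d)))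
    (hYc : IsCompact Y) (lam : ℝ) (hlam : 0 < lam)
    (hY : ∀ u ∈ Y, ∀ v ∈ Y, ∀ θ : ℝ, θ ∈ Set.Icc (0:ℝ) 1 →
      Metric.closedBall (θ • u + (1 - θ) • v) (θ * (1 - θ) * (lam / 2) * ‖u - v‖ ^ 2) ⊆ Y)
    (f : EuclideanSpace ℝ (Fin d) → ℝ)
    (f' : EuclideanSpace ℝ (Fin d) → EuclideanSpace ℝ (Fin d))
    (L B : ℝ) (hL : 0 < L) (hB : 0 < B)
    (hdiff : ∀ x, HasGradientAt f (f' x) x)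
    (hsmooth : ∀ u v, ‖f' u - f' v‖ ≤ L * ‖u - v‖)
    (hgradB : ∀ y ∈ Y, B ≤ ‖f' y‖)
    (w₁ w₂ : EuclideanSpace ℝ (Fin d)) (hw₁ : w₁ ∈ Y) (hw₂ : w₂ ∈ Y)
    (y₁ y₂ : EuclideanSpace ℝ (Fin d))
    (hy₁ : y₁ ∈ Y ∧ ∀ y ∈ Y, ⟪-(f' w₁), y⟫ ≤ ⟪-(f' w₁), y₁⟫)
    (hy₂ : y₂ ∈ Y ∧ ∀ y ∈ Y, ⟪-(f' w₂), y⟫ ≤ ⟪-(f' w₂), y₂⟫) :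
    ‖y₁ - y₂‖ ≤ 2 * L * ‖w₁ - w₂‖ / (lam * (‖f' w₁‖ + ‖f' w₂‖)) ∧
      2 * L * ‖w₁ - w₂‖ / (lam * (‖f' w₁‖ + ‖f' w₂‖)) ≤ L * ‖w₁ - w₂‖ / (lam * B) := by
  
  have hB1 : B ≤ ‖f' w₁‖ := hgradB w₁ hw₁
  have hB2 : B ≤ ‖f' w₂‖ := hgradB w₂ hw₂
  have hSpos : 0 < ‖f' w₁‖ + ‖f' w₂‖ := by linarith
  have ha1 : -(f' w₁) ≠ 0 := by
    simp only [ne_eq, neg_eq_zero]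
    intro h; rw [h] at hB1; simp at hB1; linarith
  have ha2 : -(f' w₂) ≠ 0 := by
    simp only [ne_eq, neg_eq_zero]
    intro h; rw [h] at hB2; simp at hB2; linarith
  have k1 := argmax_key Y lam hlam hY (-(f' w₁)) y₁ y₂ ha1 hy₁.1 hy₂.1 hy₁.2
  have k2 := argmax_key Y lam hlam hY (-(f' w₂)) y₂ y₁ ha2 hy₂.1 hy₁.1 hy₂.2
  rw [norm_neg] at k1 k2
  set D : ℝ := ‖y₁ - y₂‖ with hD
  have hDnn : 0 ≤ D := norm_nonneg _
  have hD21 : ‖y₂ - y₁‖ = D := norm_sub_rev _ _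
  rw [hD21] at k2
  have hsum : ⟪-(f' w₁), y₁ - y₂⟫ + ⟪-(f' w₂), y₂ - y₁⟫ = ⟪f' w₂ - f' w₁, y₁ - y₂⟫ := by
    rw [inner_sub_left, inner_neg_left, inner_neg_left, inner_sub_right, inner_sub_right,
      inner_sub_right]
    ring
  have hcs : ⟪f' w₂ - f' w₁, y₁ - y₂⟫ ≤ ‖f' w₂ - f' w₁‖ * D := real_inner_le_norm _ _
  have hsm : ‖f' w₂ - f' w₁‖ ≤ L * ‖w₁ - w₂‖ := by
    rw [norm_sub_rev w₁ w₂]; exact hsmooth w₂ w₁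
  have hmain : lam / 2 * D ^ 2 * (‖f' w₁‖ + ‖f' w₂‖) ≤ L * ‖w₁ - w₂‖ * D := by
    nlinarith
  constructor
  · rw [le_div_iff₀ (by positivity)]
    rcases eq_or_lt_of_le hDnn with h | h
    · rw [← h]; simp only [mul_zero, zero_mul]; positivity
    · nlinarith
  · have h1 : 2 * L * ‖w₁ - w₂‖ / (lam * (‖f' w₁‖ + ‖f' w₂‖)) ≤
        2 * L * ‖w₁ - w₂‖ / (lam * (2 * B)) := by
      apply div_le_div_of_nonneg_left (by positivity) (by positivity)
      have : (2:ℝ) * B ≤ ‖f' w₁‖ + ‖f' w₂‖ := by linarith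
      nlinarith
    calc _ ≤ 2 * L * ‖w₁ - w₂‖ / (lam * (2 * B)) := h1
    _ = L * ‖w₁ - w₂‖ / (lam * B) := by field_simp
end

section
/- Let s : ℝ^d → ℝ be σ-strongly convex and L-smooth with minimizer x* and suppose a sequence x_1, ..., x_T satisfies, for subgradient-coinciding losses ℓ_t with ℓ_t(x_t) = s(x_t), ℓ_t(x) ≤ s(x) for all x, ∇ℓ_t(x_t) = ∇s(x_t), and the weighted regret bound Σ_t α_t(ℓ_t(x_t) − ℓ_t(x*)) ≤ (1/(2σ)) Σ_t α_t / (Σ_{τ≤t} α_τ) with α_t = ‖∇ℓ_t(x_t)‖^{−2} and ‖∇ℓ_t(x_t)‖ ≤ G. Then T ≤ (L/σ)(1 + log(G² Σ_t α_t)), and consequently Σ_t α_t ≥ (1/(3G²)) e^{(σ/L)T} whenever T ≥ (L/σ) log 3. -/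
/-!
Every step contributes exactly `1 = α_t ‖∇s(x_t)‖²` to `T`, and by `L`-smoothness
`‖∇s(x_t)‖² ≤ 2L (s(x_t) - s(x*)) ≤ 2L (ℓ_t(x_t) - ℓ_t(x*))`. Hence `T` is at most `2L` times the
weighted regret, which the hypothesis bounds by `(L/σ) Σ_t α_t / A_t` with `A_t = Σ_{τ ≤ t} α_τ`.
Since `α_t / A_t ≤ log (A_t / A_{t-1})`, this sum telescopes to `1 + log (A_T / α_0)`, and
`1 / α_0 ≤ G²`. Exponentiating and using `e ≤ 3` gives the second claim.
-/

open scoped RealInnerProductSpace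
open Finset Real

section Smooth

variable {E : Type*} [NormedAddCommGroup E] [InnerProductSpace ℝ E] [CompleteSpace E]
  {f : E → ℝ} {f' : E → E} {L : ℝ}

theorem HasGradientAt.hasDerivAt_comp_add_smul {g x v : E} {t : ℝ}
    (h : HasGradientAt f g (x + t • v)) :
    HasDerivAt (fun t : ℝ => f (x + t • v)) ⟪g, v⟫ t := by
  have hline : HasDerivAt (fun t : ℝ => x + t • v) v t := by
    simpa using ((hasDerivAt_id t).smul_const v).const_add x
  simpa [InnerProductSpace.toDual_apply_apply, Function.comp_def] using
    h.hasFDerivAt.comp_hasDerivAt t hline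

theorem apply_add_le_of_lipschitz_gradient (hf : ∀ x, HasGradientAt f (f' x) x)
    (hL : ∀ u v, ‖f' u - f' v‖ ≤ L * ‖u - v‖) (x v : E) :
    f (x + v) ≤ f x + ⟪f' x, v⟫ + L / 2 * ‖v‖ ^ 2 := by
  set F : ℝ → ℝ := fun t => f (x + t • v) - t * ⟪f' x, v⟫ - L / 2 * ‖v‖ ^ 2 * t ^ 2
  have hF : ∀ t, HasDerivAt F (⟪f' (x + t • v) - f' x, v⟫ - L * ‖v‖ ^ 2 * t) t := by
    intro t
    refine ((((hf _).hasDerivAt_comp_add_smul (t := t)).sub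
      ((hasDerivAt_id t).mul_const ⟪f' x, v⟫)).sub
      ((hasDerivAt_pow 2 t).const_mul (L / 2 * ‖v‖ ^ 2))).congr_deriv ?_
    rw [inner_sub_left]
    push_cast
    ring
  have hF_deriv_nonpos : ∀ t ∈ interior (Set.Icc (0 : ℝ) 1), deriv F t ≤ 0 := by
    intro t ht
    rw [interior_Icc] at ht
    have hlip : ‖f' (x + t • v) - f' x‖ ≤ L * (t * ‖v‖) := by
      simpa [norm_smul, abs_of_pos ht.1] using hL (x + t • v) x
    rw [(hF t).deriv]
    nlinarith [real_inner_le_norm (f' (x + t • v) - f' x) v, norm_nonneg v]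
  have hFdiff : Differentiable ℝ F := fun t => (hF t).differentiableAt
  have h01 := antitoneOn_of_deriv_nonpos (convex_Icc 0 1) hFdiff.continuous.continuousOn
    hFdiff.differentiableOn hF_deriv_nonpos (Set.left_mem_Icc.2 zero_le_one)
    (Set.right_mem_Icc.2 zero_le_one) zero_le_one
  simp only [F, zero_smul, add_zero, one_smul, zero_mul, sub_zero, one_mul, one_pow] at h01
  linarith

/-- The step `x - ∇f(x) / L` already decreases `f` by `‖∇f(x)‖² / (2L)`. -/
theorem norm_gradient_sq_le (hL0 : 0 < L) (hf : ∀ x, HasGradientAt f (f' x) x)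
    (hL : ∀ u v, ‖f' u - f' v‖ ≤ L * ‖u - v‖) {xstar : E} (hmin : ∀ y, f xstar ≤ f y) (x : E) :
    ‖f' x‖ ^ 2 ≤ 2 * L * (f x - f xstar) := by
  have hdescent := apply_add_le_of_lipschitz_gradient hf hL x (-(L⁻¹ • f' x))
  rw [inner_neg_right, real_inner_smul_right, real_inner_self_eq_norm_sq, norm_neg, norm_smul,
    mul_pow, Real.norm_eq_abs, sq_abs] at hdescent
  have hquad : L / 2 * (L⁻¹ ^ 2 * ‖f' x‖ ^ 2) - L⁻¹ * ‖f' x‖ ^ 2 = -(‖f' x‖ ^ 2 / (2 * L)) := by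
    field_simp
    ring
  have hgap : ‖f' x‖ ^ 2 / (2 * L) ≤ f x - f xstar := by linarith [hmin (x + -(L⁻¹ • f' x))]
  rwa [div_le_iff₀ (by positivity), mul_comm] at hgap

theorem norm_gradient_sq_le_of_minorant (hL0 : 0 < L) (hf : ∀ x, HasGradientAt f (f' x) x)
    (hL : ∀ u v, ‖f' u - f' v‖ ≤ L * ‖u - v‖) {xstar : E} (hmin : ∀ y, f xstar ≤ f y)
    {ℓ : E → ℝ} (hℓ : ∀ y, ℓ y ≤ f y) {x : E} (hx : ℓ x = f x) :
    ‖f' x‖ ^ 2 ≤ 2 * L * (ℓ x - ℓ xstar) := by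
  have := hℓ xstar
  calc ‖f' x‖ ^ 2 ≤ 2 * L * (f x - f xstar) := norm_gradient_sq_le hL0 hf hL hmin x
    _ ≤ 2 * L * (ℓ x - ℓ xstar) := by gcongr; linarith

end Smooth

theorem div_add_le_log_sub_log {a b : ℝ} (ha : 0 < a) (hb : 0 ≤ b) :
    b / (a + b) ≤ log (a + b) - log a := by
  have h := one_sub_inv_le_log_of_pos (div_pos (add_pos_of_pos_of_nonneg ha hb) ha)
  rw [log_div (by positivity) ha.ne', inv_div] at h
  calc b / (a + b) = 1 - a / (a + b) := by field_simp; ring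
    _ ≤ _ := h

theorem sum_div_partialSum_le_one_add_log {a : ℕ → ℝ} (ha : ∀ t, 0 ≤ a t) {c : ℝ} (hc : 0 < c)
    (hca : c ≤ a 0) (T : ℕ) :
    ∑ t ∈ range T, a t / ∑ τ ∈ range (t + 1), a τ ≤ 1 + log ((∑ t ∈ range T, a t) / c) := by
  induction T with
  | zero => simp
  | succ n ih =>
    rcases n with _ | n
    · have ha0 : 0 < a 0 := hc.trans_le hca
      simpa [ha0.ne'] using log_nonneg ((one_le_div hc).2 hca)
    · have hpos : 0 < ∑ t ∈ range (n + 1), a t :=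
        (hc.trans_le hca).trans_le (single_le_sum (fun t _ => ha t) (by simp))
      rw [sum_range_succ, sum_range_succ a (n + 1),
        log_div (add_pos_of_pos_of_nonneg hpos (ha _)).ne' hc.ne']
      rw [log_div hpos.ne' hc.ne'] at ih
      linarith [div_add_le_log_sub_log hpos (ha (n + 1))]

theorem one_lt_log_three : 1 < log 3 := by
  rw [lt_log_iff_exp_lt (by norm_num)]
  linarith [exp_one_lt_d9]

theorem exp_div_le_three_mul_of_le_mul_one_add_log {c T y : ℝ} (hc : 0 < c) (hy : 0 ≤ y)
    (hcT : c < T) (h : T ≤ c * (1 + log y)) : exp (T / c) ≤ 3 * y := by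
  -- `c < T` rules out `y = 0`, where the junk value `log 0 = 0` would make `h` hold.
  have hy_pos : 0 < y := hy.lt_of_ne <| by rintro rfl; simp at h; linarith
  have hT : T / c ≤ 1 + log y := by rwa [div_le_iff₀' hc]
  calc exp (T / c) ≤ exp (1 + log y) := exp_le_exp.2 hT
    _ = exp 1 * y := by rw [exp_add, exp_log hy_pos]
    _ ≤ 3 * y := by gcongr; linarith [exp_one_lt_d9]

theorem stmt_19_general {d : ℕ} (s : EuclideanSpace ℝ (Fin d) → ℝ)
    (s' : EuclideanSpace ℝ (Fin d) → EuclideanSpace ℝ (Fin d))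
    (σ L G : ℝ) (hσ : 0 < σ) (hLσ : σ ≤ L) (hG : 0 < G)
    (hsdiff : ∀ x, HasGradientAt s (s' x) x)
    (hsmooth : ∀ u v, ‖s' u - s' v‖ ≤ L * ‖u - v‖)
    (xstar : EuclideanSpace ℝ (Fin d)) (hmin : ∀ x, s xstar ≤ s x)
    (T : ℕ) (x : ℕ → EuclideanSpace ℝ (Fin d))
    (ℓ : ℕ → EuclideanSpace ℝ (Fin d) → ℝ)
    (ℓ' : ℕ → EuclideanSpace ℝ (Fin d) → EuclideanSpace ℝ (Fin d))
    (hcoincide : ∀ t, ℓ t (x t) = s (x t))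
    (hminor : ∀ t x', ℓ t x' ≤ s x')
    (hgradco : ∀ t, ℓ' t (x t) = s' (x t))
    (hgrad0 : ∀ t, ℓ' t (x t) ≠ 0)
    (hGbound : ∀ t, ‖ℓ' t (x t)‖ ≤ G)
    (α : ℕ → ℝ) (hα : ∀ t, α t = (‖ℓ' t (x t)‖ ^ 2)⁻¹)
    (hregret : ∑ t ∈ Finset.range T, α t * (ℓ t (x t) - ℓ t xstar) ≤
      (1 / (2 * σ)) * ∑ t ∈ Finset.range T,
        α t / (∑ τ ∈ Finset.range (t + 1), α τ)) :
    (T : ℝ) ≤ (L / σ) * (1 + Real.log (G ^ 2 * ∑ t ∈ Finset.range T, α t)) ∧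
    ((L / σ) * Real.log 3 ≤ (T : ℝ) →
      (1 / (3 * G ^ 2)) * Real.exp ((σ / L) * T) ≤ ∑ t ∈ Finset.range T, α t) := by
  have hL : 0 < L := hσ.trans_le hLσ
  have hg : ∀ t, 0 < ‖ℓ' t (x t)‖ := fun t => norm_pos_iff.2 (hgrad0 t)
  have hαpos : ∀ t, 0 < α t := fun t => by rw [hα]; exact inv_pos.2 (pow_pos (hg t) 2)
  have hstep : ∀ t, 1 ≤ 2 * L * (α t * (ℓ t (x t) - ℓ t xstar)) := fun t => calc
    1 = α t * ‖ℓ' t (x t)‖ ^ 2 := by rw [hα]; field_simp [(hg t).ne']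
    _ ≤ α t * (2 * L * (ℓ t (x t) - ℓ t xstar)) := by
      rw [hgradco]
      exact mul_le_mul_of_nonneg_left (norm_gradient_sq_le_of_minorant hL hsdiff hsmooth hmin
        (hminor t) (hcoincide t)) (hαpos t).le
    _ = 2 * L * (α t * (ℓ t (x t) - ℓ t xstar)) := by ring
  have hweights : (G ^ 2)⁻¹ ≤ α 0 := by
    rw [hα]; gcongr; exacts [pow_pos (hg 0) 2, hGbound 0]
  have hbound : (T : ℝ) ≤ (L / σ) * (1 + log (G ^ 2 * ∑ t ∈ range T, α t)) := calc
    (T : ℝ) = ∑ t ∈ range T, 1 := by simp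
    _ ≤ 2 * L * ∑ t ∈ range T, α t * (ℓ t (x t) - ℓ t xstar) := by
      rw [mul_sum]; exact sum_le_sum fun t _ => hstep t
    _ ≤ 2 * L * ((1 / (2 * σ)) * ∑ t ∈ range T, α t / ∑ τ ∈ range (t + 1), α τ) := by gcongr
    _ = (L / σ) * ∑ t ∈ range T, α t / ∑ τ ∈ range (t + 1), α τ := by field_simp
    _ ≤ (L / σ) * (1 + log (G ^ 2 * ∑ t ∈ range T, α t)) := by
      gcongr
      simpa [div_inv_eq_mul, mul_comm] using sum_div_partialSum_le_one_add_log
        (fun t => (hαpos t).le) (by positivity) hweights T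
  refine ⟨hbound, fun hT => ?_⟩
  have hLσT : L / σ < T := (lt_mul_of_one_lt_right (by positivity) one_lt_log_three).trans_le hT
  have hexp := exp_div_le_three_mul_of_le_mul_one_add_log (by positivity)
    (mul_nonneg (sq_nonneg G) (sum_nonneg fun t _ => (hαpos t).le)) hLσT hbound
  rw [show (T : ℝ) / (L / σ) = σ / L * T by field_simp] at hexp
  rw [one_div_mul_eq_div, div_le_iff₀ (by positivity)]
  linarith

/-- Linear-rate bound for adaptive gradient-norm weights: under the weighted regret
bound with weights `α_t = ‖∇ℓ_t(x_t)‖⁻²`, one has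
`T ≤ (L/σ)(1 + log(G² Σ_t α_t))`, hence `Σ_t α_t ≥ (1/(3G²)) e^{(σ/L)T}` once
`T ≥ (L/σ) log 3`. -/
theorem stmt_19 {d : ℕ} (s : EuclideanSpace ℝ (Fin d) → ℝ)
    (s' : EuclideanSpace ℝ (Fin d) → EuclideanSpace ℝ (Fin d))
    (σ L G : ℝ) (hσ : 0 < σ) (hLσ : σ ≤ L) (hG : 0 < G)
    (hsdiff : ∀ x, HasGradientAt s (s' x) x)
    (hsc : ∀ u v, s u ≥ s v + ⟪s' v, u - v⟫ + σ / 2 * ‖u - v‖ ^ 2)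
    (hsmooth : ∀ u v, ‖s' u - s' v‖ ≤ L * ‖u - v‖)
    (xstar : EuclideanSpace ℝ (Fin d)) (hmin : ∀ x, s xstar ≤ s x)
    (T : ℕ) (x : ℕ → EuclideanSpace ℝ (Fin d))
    (ℓ : ℕ → EuclideanSpace ℝ (Fin d) → ℝ)
    (ℓ' : ℕ → EuclideanSpace ℝ (Fin d) → EuclideanSpace ℝ (Fin d))
    (hℓdiff : ∀ t x', HasGradientAt (ℓ t) (ℓ' t x') x')
    (hcoincide : ∀ t, ℓ t (x t) = s (x t))
    (hminor : ∀ t x', ℓ t x' ≤ s x')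
    (hgradco : ∀ t, ℓ' t (x t) = s' (x t))
    (hgrad0 : ∀ t, ℓ' t (x t) ≠ 0)
    (hGbound : ∀ t, ‖ℓ' t (x t)‖ ≤ G)
    (α : ℕ → ℝ) (hα : ∀ t, α t = (‖ℓ' t (x t)‖ ^ 2)⁻¹)
    (hregret : ∑ t ∈ Finset.range T, α t * (ℓ t (x t) - ℓ t xstar) ≤
      (1 / (2 * σ)) * ∑ t ∈ Finset.range T,
        α t / (∑ τ ∈ Finset.range (t + 1), α τ)) :
    (T : ℝ) ≤ (L / σ) * (1 + Real.log (G ^ 2 * ∑ t ∈ Finset.range T, α t)) ∧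
    ((L / σ) * Real.log 3 ≤ (T : ℝ) →
      (1 / (3 * G ^ 2)) * Real.exp ((σ / L) * T) ≤ ∑ t ∈ Finset.range T, α t) :=
  stmt_19_general s s' σ L G hσ hLσ hG hsdiff hsmooth xstar hmin T x ℓ ℓ' hcoincide hminor hgradco
    hgrad0 hGbound α hα hregret
end
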